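/- arXiv:2510.21646 — 3 statements merged into one kernel-verified Lean document; each statement's English description precedes it below -/
import Mathlib

section
/- Let (M,g) be semi-Riemannian of dimension d ≥ 3, and for f ∈ C^∞(M) define A_g(f) := (Hess_g f + f · Sch_g)^{tf}, the trace-free part with respect to g of the Hessian of f plus f times the Schouten tensor. Then for any nowhere-vanishing smooth function ω, A_{ω²g}(ω f) = ω · A_g(f). -/
noncomputable section
open scoped BigOperators

/-- Partial derivative of `f` in the `i`-th coordinate direction at `x`. -/
def pd {d : ℕ} (i : Fin d) (f : (Fin d → ℝ) → ℝ) (x : Fin d → ℝ) : ℝ :=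
  fderiv ℝ f x (Pi.single i 1)

/-- The inverse metric `g^{ij}` at `x`. -/
def minv {d : ℕ} (g : (Fin d → ℝ) → Fin d → Fin d → ℝ) (x : Fin d → ℝ) :
    Matrix (Fin d) (Fin d) ℝ :=
  (Matrix.of (g x))⁻¹

/-- Christoffel symbols `Γ^k_{ij}` of the Levi-Civita connection of `g` in coordinates. -/
def christoffel {d : ℕ} (g : (Fin d → ℝ) → Fin d → Fin d → ℝ) (x : Fin d → ℝ)
    (k i j : Fin d) : ℝ :=
  (1 / 2) * ∑ l, minv g x k l *
    (pd i (fun y => g y l j) x + pd j (fun y => g y l i) x - pd l (fun y => g y i j) x)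

/-- Hessian `(∇²f)_{ij}` with respect to the Levi-Civita connection of `g`. -/
def hessT {d : ℕ} (g : (Fin d → ℝ) → Fin d → Fin d → ℝ) (f : (Fin d → ℝ) → ℝ)
    (x : Fin d → ℝ) (i j : Fin d) : ℝ :=
  pd i (pd j f) x - ∑ k, christoffel g x k i j * pd k f x

/-- Ricci tensor `R_{ij}` of `g` in coordinates. -/
def ricciT {d : ℕ} (g : (Fin d → ℝ) → Fin d → Fin d → ℝ) (x : Fin d → ℝ)
    (i j : Fin d) : ℝ :=
  (∑ k, (pd k (fun y => christoffel g y k i j) x - pd i (fun y => christoffel g y k k j) x))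
    + ∑ k, ∑ l, (christoffel g x k k l * christoffel g x l i j
        - christoffel g x k i l * christoffel g x l k j)

/-- Scalar curvature `Scal_g = g^{ij} R_{ij}`. -/
def scalT {d : ℕ} (g : (Fin d → ℝ) → Fin d → Fin d → ℝ) (x : Fin d → ℝ) : ℝ :=
  ∑ i, ∑ j, minv g x i j * ricciT g x i j

/-- Schouten tensor `Sch_g = (1/(d-2))(Ric_g - Scal_g/(2(d-1)) g)`. -/
def schoutenT {d : ℕ} (g : (Fin d → ℝ) → Fin d → Fin d → ℝ) (x : Fin d → ℝ)
    (i j : Fin d) : ℝ :=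
  (1 / ((d : ℝ) - 2)) * (ricciT g x i j - scalT g x / (2 * ((d : ℝ) - 1)) * g x i j)

/-- Trace (with respect to `g`) of the Schouten tensor. -/
def ltrT {d : ℕ} (g : (Fin d → ℝ) → Fin d → Fin d → ℝ) (x : Fin d → ℝ) : ℝ :=
  ∑ i, ∑ j, minv g x i j * schoutenT g x i j

/-- Laplace–Beltrami operator `□_g f = g^{ij}(∇²f)_{ij}`. -/
def boxT {d : ℕ} (g : (Fin d → ℝ) → Fin d → Fin d → ℝ) (f : (Fin d → ℝ) → ℝ)
    (x : Fin d → ℝ) : ℝ :=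
  ∑ i, ∑ j, minv g x i j * hessT g f x i j

/-- Trace-free part (with respect to `g`) of a symmetric (0,2)-tensor `T`:
`T - (tr_g T / d) g`. -/
def tfT {d : ℕ} (g T : (Fin d → ℝ) → Fin d → Fin d → ℝ) (x : Fin d → ℝ)
    (i j : Fin d) : ℝ :=
  T x i j - ((∑ a, ∑ b, minv g x a b * T x a b) / (d : ℝ)) * g x i j

/-- Gradient `(grad f)^i = g^{ij} ∂_j f`. -/
def gradT {d : ℕ} (g : (Fin d → ℝ) → Fin d → Fin d → ℝ) (f : (Fin d → ℝ) → ℝ)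
    (x : Fin d → ℝ) (i : Fin d) : ℝ :=
  ∑ j, minv g x i j * pd j f x

/-- `|∇f|²_g = g^{ij} ∂_i f ∂_j f`. -/
def normSqGradT {d : ℕ} (g : (Fin d → ℝ) → Fin d → Fin d → ℝ) (f : (Fin d → ℝ) → ℝ)
    (x : Fin d → ℝ) : ℝ :=
  ∑ i, gradT g f x i * pd i f x

/-- Lie derivative of the metric along the vector field `η`:
`(L_η g)_{ij} = η^k ∂_k g_{ij} + g_{kj} ∂_i η^k + g_{ik} ∂_j η^k`. -/
def lieMetric {d : ℕ} (g : (Fin d → ℝ) → Fin d → Fin d → ℝ)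
    (η : (Fin d → ℝ) → Fin d → ℝ) (x : Fin d → ℝ) (i j : Fin d) : ℝ :=
  ∑ k, (η x k * pd k (fun y => g y i j) x
    + g x k j * pd i (fun y => η y k) x + g x i k * pd j (fun y => η y k) x)

/-- Lie derivative of the inverse metric along `η`:
`(L_η g⁻¹)^{ij} = η^k ∂_k g^{ij} - g^{kj} ∂_k η^i - g^{ik} ∂_k η^j`. -/
def lieInvMetric {d : ℕ} (g : (Fin d → ℝ) → Fin d → Fin d → ℝ)
    (η : (Fin d → ℝ) → Fin d → ℝ) (x : Fin d → ℝ) (i j : Fin d) : ℝ :=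
  ∑ k, (η x k * pd k (fun y => minv g y i j) x
    - minv g x k j * pd k (fun y => η y i) x - minv g x i k * pd k (fun y => η y j) x)

/-- The quasi-Einstein scalar `𝔰 = d⁻¹(□_g Ω + Ω L)`, `L` the trace of the Schouten tensor. -/
def sQE {d : ℕ} (g : (Fin d → ℝ) → Fin d → Fin d → ℝ) (Ω : (Fin d → ℝ) → ℝ)
    (x : Fin d → ℝ) : ℝ :=
  (1 / (d : ℝ)) * (boxT g Ω x + Ω x * ltrT g x)

/-- The conformally covariant operator `A_g(f) = (Hess_g f + f · Sch_g)^{tf}`. -/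
def Aop {d : ℕ} (g : (Fin d → ℝ) → Fin d → Fin d → ℝ) (f : (Fin d → ℝ) → ℝ)
    (x : Fin d → ℝ) (i j : Fin d) : ℝ :=
  tfT g (fun y a b => hessT g f y a b + f y * schoutenT g y a b) x i j

section Lemmas
variable {d : ℕ} {x : Fin d → ℝ}


lemma contDiff_pd {f : (Fin d → ℝ) → ℝ} (hf : ContDiff ℝ (⊤ : ℕ∞) f) (i : Fin d) :
    ContDiff ℝ (⊤ : ℕ∞) (pd i f) := by
  have h1 : ContDiff ℝ (⊤ : ℕ∞) (fderiv ℝ f) := hf.fderiv_right (by simp)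
  exact (ContinuousLinearMap.apply ℝ ℝ (Pi.single i 1 : Fin d → ℝ)).contDiff.comp h1

lemma pd_add {f g : (Fin d → ℝ) → ℝ} (hf : DifferentiableAt ℝ f x)
    (hg : DifferentiableAt ℝ g x) (i : Fin d) :
    pd i (fun y => f y + g y) x = pd i f x + pd i g x := by
  unfold pd
  rw [fderiv_fun_add hf hg]; rfl

lemma pd_mul {x : Fin d → ℝ} {f g : (Fin d → ℝ) → ℝ} (hf : DifferentiableAt ℝ f x)
    (hg : DifferentiableAt ℝ g x) (i : Fin d) :
    pd i (fun y => f y * g y) x = pd i f x * g x + f x * pd i g x := by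
  unfold pd
  rw [fderiv_fun_mul hf hg]; simp; ring

lemma pd_sub {x : Fin d → ℝ} {f g : (Fin d → ℝ) → ℝ} (hf : DifferentiableAt ℝ f x)
    (hg : DifferentiableAt ℝ g x) (i : Fin d) :
    pd i (fun y => f y - g y) x = pd i f x - pd i g x := by
  unfold pd; rw [fderiv_fun_sub hf hg]; rfl

lemma pd_const (c : ℝ) (i : Fin d) (x : Fin d → ℝ) : pd i (fun _ => c) x = 0 := by
  unfold pd; rw [fderiv_fun_const]; rfl

lemma pd_sum {x : Fin d → ℝ} {s : Finset (Fin d)} {F : Fin d → (Fin d → ℝ) → ℝ}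
    (hF : ∀ k ∈ s, DifferentiableAt ℝ (F k) x) (i : Fin d) :
    pd i (fun y => ∑ k ∈ s, F k y) x = ∑ k ∈ s, pd i (F k) x := by
  unfold pd
  rw [fderiv_fun_sum hF]; simp

lemma pd_comm {f : (Fin d → ℝ) → ℝ} (hf : ContDiff ℝ (⊤ : ℕ∞) f) (i j : Fin d) (x : Fin d → ℝ) :
    pd i (pd j f) x = pd j (pd i f) x := by
  have hsymm : IsSymmSndFDerivAt ℝ f x := by
    apply ContDiffAt.isSymmSndFDerivAt (n := 2) (hf.of_le (by exact WithTop.coe_le_coe.2 (le_top : (2 : ℕ∞) ≤ ⊤))).contDiffAt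
    norm_num
  have key : ∀ a b : Fin d,
      pd a (pd b f) x
        = (fderiv ℝ (fderiv ℝ f) x (Pi.single a 1)) (Pi.single b 1) := by
    intro a b
    unfold pd
    rw [fderiv_clm_apply (((hf.fderiv_right (m := (⊤ : ℕ∞)) (by simp)).differentiable (by simp)) x)
      (differentiableAt_const _)]
    simp
  rw [key, key, hsymm.eq]

variable {g : (Fin d → ℝ) → Fin d → Fin d → ℝ}
 {g : (Fin d → ℝ) → Fin d → Fin d → ℝ}

lemma contDiff_det_of_entries {M : (Fin d → ℝ) → Matrix (Fin d) (Fin d) ℝ}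
    (hM : ∀ a b, ContDiff ℝ (⊤ : ℕ∞) (fun y => M y a b)) :
    ContDiff ℝ (⊤ : ℕ∞) (fun y => (M y).det) := by
  classical
  have : (fun y => (M y).det)
      = fun y => ∑ σ : Equiv.Perm (Fin d), (((Equiv.Perm.sign σ : ℤ) : ℝ)) * ∏ i, M y (σ i) i := by
    funext y; rw [Matrix.det_apply]
    refine Finset.sum_congr rfl fun σ _ => ?_
    rw [Units.smul_def, zsmul_eq_mul]
  rw [this]
  apply ContDiff.sum fun σ _ => ContDiff.mul contDiff_const ?_
  exact contDiff_prod fun k _ => hM _ _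

lemma contDiff_entry (hg : ContDiff ℝ (⊤ : ℕ∞) g) (a b : Fin d) :
    ContDiff ℝ (⊤ : ℕ∞) (fun y => g y a b) :=
  (contDiff_pi.1 (contDiff_pi.1 hg a)) b

lemma contDiff_detg (hg : ContDiff ℝ (⊤ : ℕ∞) g) :
    ContDiff ℝ (⊤ : ℕ∞) (fun y => (Matrix.of (g y)).det) :=
  contDiff_det_of_entries fun a b => contDiff_entry hg a b

lemma contDiff_adjugate (hg : ContDiff ℝ (⊤ : ℕ∞) g) (a b : Fin d) :
    ContDiff ℝ (⊤ : ℕ∞) (fun y => (Matrix.of (g y)).adjugate a b) := by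
  classical
  have : (fun y => (Matrix.of (g y)).adjugate a b)
      = fun y => ((Matrix.of (g y)).updateRow b (Pi.single a 1)).det := by
    funext y; rw [Matrix.adjugate_apply]
  rw [this]
  apply contDiff_det_of_entries
  intro c e
  by_cases h : c = b
  · subst h; simp [Matrix.updateRow_apply]; exact contDiff_const
  · simp only [Matrix.updateRow_apply, if_neg h]
    exact contDiff_entry hg c e

lemma minv_entry_eq (hdet : ∀ x, IsUnit (Matrix.of (g x)).det) (x : Fin d → ℝ) (a b : Fin d) :
    minv g x a b = ((Matrix.of (g x)).det)⁻¹ * (Matrix.of (g x)).adjugate a b := by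
  unfold minv
  rw [Matrix.inv_def, Ring.inverse_eq_inv']
  rfl

lemma contDiff_minv (hg : ContDiff ℝ (⊤ : ℕ∞) g) (hdet : ∀ x, IsUnit (Matrix.of (g x)).det)
    (a b : Fin d) : ContDiff ℝ (⊤ : ℕ∞) (fun y => minv g y a b) := by
  have : (fun y => minv g y a b)
      = fun y => (Matrix.of (g y)).adjugate a b / (Matrix.of (g y)).det := by
    funext y; rw [minv_entry_eq hdet]; ring
  rw [this]
  exact (contDiff_adjugate hg a b).div (contDiff_detg hg)
    (fun y => (hdet y).ne_zero)

lemma minv_mul (hdet : ∀ x, IsUnit (Matrix.of (g x)).det) (x : Fin d → ℝ) (k j : Fin d) :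
    ∑ l, minv g x k l * g x l j = if k = j then 1 else 0 := by
  have h := Matrix.nonsing_inv_mul (Matrix.of (g x)) (hdet x)
  have := congrFun (congrFun h k) j
  rw [Matrix.mul_apply] at this
  simpa [Matrix.one_apply, minv] using this

lemma mul_minv (hdet : ∀ x, IsUnit (Matrix.of (g x)).det) (x : Fin d → ℝ) (k j : Fin d) :
    ∑ l, g x k l * minv g x l j = if k = j then 1 else 0 := by
  have h := Matrix.mul_nonsing_inv (Matrix.of (g x)) (hdet x)
  have := congrFun (congrFun h k) j
  rw [Matrix.mul_apply] at this
  simpa [Matrix.one_apply, minv] using this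

lemma minv_symm (hsymm : ∀ x i j, g x i j = g x j i) (x : Fin d → ℝ) (a b : Fin d) :
    minv g x a b = minv g x b a := by
  have hT : (Matrix.of (g x)).transpose = Matrix.of (g x) := by
    ext i j; simp [Matrix.transpose_apply, hsymm x j i]
  have := Matrix.transpose_nonsing_inv (Matrix.of (g x))
  rw [hT] at this
  have := congrFun (congrFun this b) a
  simpa [Matrix.transpose_apply, minv] using this

lemma minv_smul (hdet : ∀ x, IsUnit (Matrix.of (g x)).det) {ω : (Fin d → ℝ) → ℝ}
    (hω0 : ∀ x, ω x ≠ 0) (x : Fin d → ℝ) (a b : Fin d) :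
    minv (fun y p q => ω y ^ 2 * g y p q) x a b = (ω x ^ 2)⁻¹ * minv g x a b := by
  have hc : ω x ^ 2 ≠ 0 := pow_ne_zero _ (hω0 x)
  have hof : (Matrix.of (fun p q => ω x ^ 2 * g x p q)) = (ω x ^ 2) • Matrix.of (g x) := by
    ext p q; simp
  unfold minv
  rw [hof]
  letI := invertibleOfNonzero hc
  have h2 := Matrix.inv_smul (A := Matrix.of (g x)) (ω x ^ 2) (hdet x)
  rw [h2]
  have : (⅟(ω x ^ 2) : ℝ) = (ω x ^ 2)⁻¹ := invOf_eq_right_inv (mul_inv_cancel₀ hc)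
  simp [this]

end Lemmas

-- SEC3 marker
section Sec3
variable {d : ℕ} {g : (Fin d → ℝ) → Fin d → Fin d → ℝ} {ω f : (Fin d → ℝ) → ℝ}

lemma pd_inv {x : Fin d → ℝ} {g : (Fin d → ℝ) → ℝ}
    (hg : DifferentiableAt ℝ g x) (hgx : g x ≠ 0) (i : Fin d) :
    pd i (fun y => (g y)⁻¹) x = - pd i g x / g x ^ 2 := by
  unfold pd
  have hc : (fun y => (g y)⁻¹) = Inv.inv ∘ g := rfl
  rw [hc, fderiv_comp x (differentiableAt_inv hgx) hg, fderiv_inv' hgx]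
  simp [pow_two]
  try field_simp
  try ring

lemma pd_div {x : Fin d → ℝ} {f g : (Fin d → ℝ) → ℝ} (hf : DifferentiableAt ℝ f x)
    (hg : DifferentiableAt ℝ g x) (hgx : g x ≠ 0) (i : Fin d) :
    pd i (fun y => f y / g y) x = (pd i f x * g x - f x * pd i g x) / (g x) ^ 2 := by
  have hdiv : (fun y => f y / g y) = fun y => f y * (g y)⁻¹ := by
    funext y; rw [div_eq_mul_inv]
  rw [hdiv, pd_mul (g := fun y => (g y)⁻¹) hf (hg.inv hgx), pd_inv hg hgx]
  field_simp
  ring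

/-- `v_j = ∂_j ω / ω`. -/
def vfun (ω : (Fin d → ℝ) → ℝ) (j : Fin d) (y : Fin d → ℝ) : ℝ := pd j ω y / ω y

/-- `V^k = g^{kl} v_l`. -/
def Vfun (g : (Fin d → ℝ) → Fin d → Fin d → ℝ) (ω : (Fin d → ℝ) → ℝ) (k : Fin d)
    (y : Fin d → ℝ) : ℝ := ∑ l, minv g y k l * vfun ω l y

/-- correction term in the Christoffel transformation -/
def cC (g : (Fin d → ℝ) → Fin d → Fin d → ℝ) (ω : (Fin d → ℝ) → ℝ) (y : Fin d → ℝ)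
    (k i j : Fin d) : ℝ :=
  (if k = i then vfun ω j y else 0) + (if k = j then vfun ω i y else 0)
    - g y i j * Vfun g ω k y

variable (hg : ContDiff ℝ (⊤ : ℕ∞) g) (hdet : ∀ x, IsUnit (Matrix.of (g x)).det)
  (hω : ContDiff ℝ (⊤ : ℕ∞) ω) (hω0 : ∀ x, ω x ≠ 0)

section
include hω hω0
lemma contDiff_v (j : Fin d) : ContDiff ℝ (⊤ : ℕ∞) (vfun ω j) :=
  (contDiff_pd hω j).div hω hω0
end

section
include hg hdet hω hω0
lemma contDiff_V (k : Fin d) : ContDiff ℝ (⊤ : ℕ∞) (Vfun g ω k) := by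
  apply ContDiff.sum fun l _ => (contDiff_minv hg hdet k l).mul (contDiff_v hω hω0 l)
end

section
include hg hdet
lemma contDiff_christoffel (k i j : Fin d) :
    ContDiff ℝ (⊤ : ℕ∞) (fun y => christoffel g y k i j) := by
  unfold christoffel
  apply contDiff_const.mul
  apply ContDiff.sum fun l _ => (contDiff_minv hg hdet k l).mul ?_
  exact ((contDiff_pd (contDiff_entry hg l j) i).add
    (contDiff_pd (contDiff_entry hg l i) j)).sub (contDiff_pd (contDiff_entry hg i j) l)
end

section
include hg hdet hω hω0
lemma contDiff_cC (k i j : Fin d) : ContDiff ℝ (⊤ : ℕ∞) (fun y => cC g ω y k i j) := by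
  unfold cC
  apply ContDiff.sub
  · apply ContDiff.add
    · by_cases h : k = i <;> simp [h] <;>
        first | exact contDiff_v hω hω0 _ | exact contDiff_const
    · by_cases h : k = j <;> simp [h] <;>
        first | exact contDiff_v hω hω0 _ | exact contDiff_const
  · exact (contDiff_entry hg i j).mul (contDiff_V hg hdet hω hω0 k)
end

section
include hω
lemma pd_omega_sq_mul {h : (Fin d → ℝ) → ℝ} (hh : ContDiff ℝ (⊤ : ℕ∞) h) (e : Fin d)
    (x : Fin d → ℝ) :
    pd e (fun y => ω y ^ 2 * h y) x
      = 2 * ω x * pd e ω x * h x + ω x ^ 2 * pd e h x := by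
  have h1 : (fun y => ω y ^ 2 * h y) = fun y => (ω y * ω y) * h y := by
    funext y; ring
  rw [h1, pd_mul ((hω.mul hω).differentiable (by simp) x) (hh.differentiable (by simp) x),
    pd_mul (hω.differentiable (by simp) x) (hω.differentiable (by simp) x)]
  ring
end

section
include hg hdet hω hω0
lemma christoffel_conf (x : Fin d → ℝ) (k i j : Fin d) :
    christoffel (fun y a b => ω y ^ 2 * g y a b) x k i j
      = christoffel g x k i j + cC g ω x k i j := by
  unfold christoffel
  have hsplit : ∀ l ∈ (Finset.univ : Finset (Fin d)),
      minv (fun y a b => ω y ^ 2 * g y a b) x k l *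
        (pd i (fun y => (fun a b => ω y ^ 2 * g y a b) l j) x
          + pd j (fun y => (fun a b => ω y ^ 2 * g y a b) l i) x
          - pd l (fun y => (fun a b => ω y ^ 2 * g y a b) i j) x)
      = minv g x k l * (pd i (fun y => g y l j) x + pd j (fun y => g y l i) x
            - pd l (fun y => g y i j) x)
        + (2 * vfun ω i x) * (minv g x k l * g x l j)
        + (2 * vfun ω j x) * (minv g x k l * g x l i)
        - (2 * g x i j) * (minv g x k l * vfun ω l x) := by
    intro l _
    rw [minv_smul hdet hω0 x k l,
      pd_omega_sq_mul hω (contDiff_entry hg l j) i x,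
      pd_omega_sq_mul hω (contDiff_entry hg l i) j x,
      pd_omega_sq_mul hω (contDiff_entry hg i j) l x]
    unfold vfun
    field_simp [hω0 x]
    ring
  rw [Finset.sum_congr rfl hsplit, Finset.sum_sub_distrib, Finset.sum_add_distrib,
    Finset.sum_add_distrib, ← Finset.mul_sum, ← Finset.mul_sum, ← Finset.mul_sum,
    minv_mul hdet x k j, minv_mul hdet x k i]
  unfold cC Vfun
  by_cases hki : k = i
  · subst hki
    by_cases hkj : k = j
    · subst hkj; simp; ring
    · simp [hkj]; ring
  · by_cases hkj : k = j
    · subst hkj; simp [hki]; ring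
    · simp [hki, hkj]; ring
end

end Sec3

-- SEC4 marker
section Sec4
variable {d : ℕ} {g : (Fin d → ℝ) → Fin d → Fin d → ℝ} {ω f : (Fin d → ℝ) → ℝ}
variable (hg : ContDiff ℝ (⊤ : ℕ∞) g) (hdet : ∀ x, IsUnit (Matrix.of (g x)).det)
  (hsymm : ∀ x i j, g x i j = g x j i)
  (hω : ContDiff ℝ (⊤ : ℕ∞) ω) (hω0 : ∀ x, ω x ≠ 0)

lemma pd_entry_symm (hsymm : ∀ x i j, g x i j = g x j i) (e a b : Fin d) (x : Fin d → ℝ) :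
    pd e (fun y => g y a b) x = pd e (fun y => g y b a) x := by
  have : (fun y => g y a b) = fun y => g y b a := funext fun y => hsymm y a b
  rw [this]

section
include hg hdet hω hω0
/-- Hessian transformation under conformal change. -/
lemma hess_conf {h : (Fin d → ℝ) → ℝ} (hh : ContDiff ℝ (⊤ : ℕ∞) h) (x : Fin d → ℝ) (i j : Fin d) :
    hessT (fun y a b => ω y ^ 2 * g y a b) h x i j
      = hessT g h x i j - vfun ω i x * pd j h x - vfun ω j x * pd i h x
        + g x i j * ∑ k, Vfun g ω k x * pd k h x := by
  unfold hessT
  have hre : ∀ k ∈ (Finset.univ : Finset (Fin d)),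
      christoffel (fun y a b => ω y ^ 2 * g y a b) x k i j * pd k h x
        = christoffel g x k i j * pd k h x
          + ((if k = i then vfun ω j x * pd k h x else 0)
            + (if k = j then vfun ω i x * pd k h x else 0))
          - g x i j * (Vfun g ω k x * pd k h x) := by
    intro k _
    rw [christoffel_conf hg hdet hω hω0 x k i j]
    unfold cC
    by_cases hki : k = i
    · subst hki
      by_cases hkj : k = j
      · subst hkj; simp; ring
      · simp [hkj]; ring
    · by_cases hkj : k = j
      · subst hkj; simp [hki]; ring
      · simp [hki, hkj]; ring
  rw [Finset.sum_congr rfl hre, Finset.sum_sub_distrib, Finset.sum_add_distrib,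
    Finset.sum_add_distrib, ← Finset.mul_sum]
  simp only [Finset.sum_ite_eq', Finset.mem_univ, if_true]
  ring
end

section
include hg hdet hsymm
lemma christoffel_contract (x : Fin d → ℝ) (a b j : Fin d) :
    ∑ k, christoffel g x k a b * g x k j
      = (1/2) * (pd a (fun y => g y j b) x + pd b (fun y => g y j a) x
          - pd j (fun y => g y a b) x) := by
  unfold christoffel
  have h1 : ∀ k ∈ (Finset.univ : Finset (Fin d)),
      ((1/2 : ℝ) * ∑ m, minv g x k m *
          (pd a (fun y => g y m b) x + pd b (fun y => g y m a) x
            - pd m (fun y => g y a b) x)) * g x k j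
        = ∑ m, (minv g x m k * g x k j) * ((1/2) *
            (pd a (fun y => g y m b) x + pd b (fun y => g y m a) x
              - pd m (fun y => g y a b) x)) := by
    intro k _
    rw [Finset.mul_sum, Finset.sum_mul]
    refine Finset.sum_congr rfl fun m _ => ?_
    rw [minv_symm hsymm x m k]
    ring
  rw [Finset.sum_congr rfl h1, Finset.sum_comm]
  have h2 : ∀ m ∈ (Finset.univ : Finset (Fin d)),
      ∑ k, (minv g x m k * g x k j) * ((1/2 : ℝ) *
          (pd a (fun y => g y m b) x + pd b (fun y => g y m a) x
            - pd m (fun y => g y a b) x))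
        = (if m = j then 1 else 0) * ((1/2) *
            (pd a (fun y => g y m b) x + pd b (fun y => g y m a) x
              - pd m (fun y => g y a b) x)) := by
    intro m _
    rw [← Finset.sum_mul, minv_mul hdet x m j]
  rw [Finset.sum_congr rfl h2]
  simp [Finset.sum_ite_eq]
end

section
include hg hdet hsymm
/-- metric compatibility in coordinates -/
lemma compat (x : Fin d → ℝ) (l i j : Fin d) :
    ∑ k, christoffel g x k l i * g x k j + ∑ k, g x i k * christoffel g x k l j
      = pd l (fun y => g y i j) x := by
  have h2 : ∑ k, g x i k * christoffel g x k l j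
      = ∑ k, christoffel g x k l j * g x k i := by
    refine Finset.sum_congr rfl fun k _ => ?_
    rw [hsymm x i k]; ring
  rw [h2, christoffel_contract hg hdet hsymm x l i j,
    christoffel_contract hg hdet hsymm x l j i,
    pd_entry_symm hsymm l j i, pd_entry_symm hsymm i j l, pd_entry_symm hsymm j l i]
  ring
end

end Sec4

-- SEC5 marker
section Sec5
variable {d : ℕ} {g : (Fin d → ℝ) → Fin d → Fin d → ℝ} {ω : (Fin d → ℝ) → ℝ}
variable (hg : ContDiff ℝ (⊤ : ℕ∞) g) (hdet : ∀ x, IsUnit (Matrix.of (g x)).det)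
  (hsymm : ∀ x i j, g x i j = g x j i)
  (hω : ContDiff ℝ (⊤ : ℕ∞) ω) (hω0 : ∀ x, ω x ≠ 0)

section
include hdet hsymm
lemma sum_gV (x : Fin d → ℝ) (j : Fin d) :
    ∑ k, g x k j * Vfun g ω k x = vfun ω j x := by
  unfold Vfun
  have h1 : ∀ k ∈ (Finset.univ : Finset (Fin d)),
      g x k j * ∑ l, minv g x k l * vfun ω l x
        = ∑ l, (g x j k * minv g x k l) * vfun ω l x := by
    intro k _
    rw [Finset.mul_sum, hsymm x k j]
    exact Finset.sum_congr rfl fun l _ => by ring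
  rw [Finset.sum_congr rfl h1, Finset.sum_comm]
  have h2 : ∀ l ∈ (Finset.univ : Finset (Fin d)),
      ∑ k, (g x j k * minv g x k l) * vfun ω l x
        = (if j = l then 1 else 0) * vfun ω l x := by
    intro l _
    rw [← Finset.sum_mul, mul_minv hdet x j l]
  rw [Finset.sum_congr rfl h2]
  simp
end

section
include hsymm
lemma christoffel_symm (x : Fin d → ℝ) (k i j : Fin d) :
    christoffel g x k i j = christoffel g x k j i := by
  unfold christoffel
  congr 1
  refine Finset.sum_congr rfl fun l _ => ?_
  rw [pd_entry_symm hsymm l i j]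
  ring
end

section
include hg hdet hω hω0
lemma pd_v_symm (x : Fin d → ℝ) (i j : Fin d) :
    pd i (vfun ω j) x = pd j (vfun ω i) x := by
  have hv : ∀ a b : Fin d, pd a (vfun ω b) x
      = (pd a (pd b ω) x * ω x - pd b ω x * pd a ω x) / ω x ^ 2 := by
    intro a b
    unfold vfun
    rw [pd_div ((contDiff_pd hω b).differentiable (by simp) x) (hω.differentiable (by simp) x)
      (hω0 x) a]
  rw [hv, hv, pd_comm hω j i x]
  ring

lemma pd_cC (x : Fin d → ℝ) (e k i j : Fin d) :
    pd e (fun y => cC g ω y k i j) x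
      = (if k = i then pd e (vfun ω j) x else 0) + (if k = j then pd e (vfun ω i) x else 0)
        - (pd e (fun y => g y i j) x * Vfun g ω k x + g x i j * pd e (Vfun g ω k) x) := by
  have hgV : DifferentiableAt ℝ (fun y => g y i j * Vfun g ω k y) x :=
    ((contDiff_entry hg i j).differentiable (by simp) x).mul
      ((contDiff_V hg hdet hω hω0 k).differentiable (by simp) x)
  have hpdgV : pd e (fun y => g y i j * Vfun g ω k y) x
      = pd e (fun y => g y i j) x * Vfun g ω k x + g x i j * pd e (Vfun g ω k) x :=
    pd_mul ((contDiff_entry hg i j).differentiable (by simp) x)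
      ((contDiff_V hg hdet hω hω0 k).differentiable (by simp) x) e
  by_cases hki : k = i
  · subst hki
    by_cases hkj : k = j
    · subst hkj
      have hc : (fun y => cC g ω y k k k) = fun y => (vfun ω k y + vfun ω k y)
          - g y k k * Vfun g ω k y := by
        funext y; unfold cC; simp
      rw [hc, pd_sub (f := fun y => vfun ω k y + vfun ω k y) (((contDiff_v hω hω0 k).differentiable (by simp) x).add
          ((contDiff_v hω hω0 k).differentiable (by simp) x)) hgV e,
        pd_add ((contDiff_v hω hω0 k).differentiable (by simp) x)
          ((contDiff_v hω hω0 k).differentiable (by simp) x) e, hpdgV]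
      simp
    · have hc : (fun y => cC g ω y k k j) = fun y => vfun ω j y
          - g y k j * Vfun g ω k y := by
        funext y; unfold cC; simp [hkj]
      rw [hc, pd_sub ((contDiff_v hω hω0 j).differentiable (by simp) x) hgV e, hpdgV]
      simp [hkj]
  · by_cases hkj : k = j
    · subst hkj
      have hc : (fun y => cC g ω y k i k) = fun y => vfun ω i y
          - g y i k * Vfun g ω k y := by
        funext y; unfold cC; simp [hki]
      rw [hc, pd_sub ((contDiff_v hω hω0 i).differentiable (by simp) x) hgV e, hpdgV]
      simp [hki]
    · have hc : (fun y => cC g ω y k i j) = fun y => (0 : ℝ)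
          - g y i j * Vfun g ω k y := by
        funext y; unfold cC; simp [hki, hkj]
      rw [hc, pd_sub (differentiableAt_const 0) hgV e, hpdgV, pd_const]
      simp [hki, hkj]
end

end Sec5

-- SEC6 marker
section Sec6
variable {d : ℕ} {g : (Fin d → ℝ) → Fin d → Fin d → ℝ} {ω : (Fin d → ℝ) → ℝ}
variable (hg : ContDiff ℝ (⊤ : ℕ∞) g) (hdet : ∀ x, IsUnit (Matrix.of (g x)).det)
  (hsymm : ∀ x i j, g x i j = g x j i)
  (hω : ContDiff ℝ (⊤ : ℕ∞) ω) (hω0 : ∀ x, ω x ≠ 0)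

lemma sum_t_c (t : Fin d → ℝ) (x : Fin d → ℝ) (i j : Fin d) :
    ∑ l, t l * cC g ω x l i j
      = t i * vfun ω j x + t j * vfun ω i x - g x i j * ∑ l, t l * Vfun g ω l x := by
  have h : ∀ l ∈ (Finset.univ : Finset (Fin d)), t l * cC g ω x l i j
      = ((if l = i then t l * vfun ω j x else 0) + (if l = j then t l * vfun ω i x else 0))
        - g x i j * (t l * Vfun g ω l x) := by
    intro l _
    unfold cC
    by_cases hli : l = i
    · subst hli
      by_cases hlj : l = j
      · subst hlj; simp; ring
      · simp [hlj]; ring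
    · by_cases hlj : l = j
      · subst hlj; simp [hli]; ring
      · simp [hli, hlj]; ring
  rw [Finset.sum_congr rfl h, Finset.sum_sub_distrib, Finset.sum_add_distrib,
    Finset.sum_ite_eq', Finset.sum_ite_eq', ← Finset.mul_sum]
  simp

lemma sum_c_t (t : Fin d → ℝ) (x : Fin d → ℝ) (k i : Fin d) :
    ∑ l, cC g ω x k i l * t l
      = (if k = i then ∑ l, vfun ω l x * t l else 0) + vfun ω i x * t k
        - Vfun g ω k x * ∑ l, g x i l * t l := by
  have h : ∀ l ∈ (Finset.univ : Finset (Fin d)), cC g ω x k i l * t l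
      = ((if k = i then vfun ω l x * t l else 0) + (if l = k then vfun ω i x * t l else 0))
        - Vfun g ω k x * (g x i l * t l) := by
    intro l _
    unfold cC
    by_cases hki : k = i
    · subst hki
      by_cases hlk : l = k
      · subst hlk; simp; ring
      · have : ¬ k = l := fun h => hlk h.symm
        simp [hlk, this]; ring
    · by_cases hlk : l = k
      · subst hlk; simp [hki]; ring
      · have : ¬ k = l := fun h => hlk h.symm
        simp [hki, hlk, this]; ring
  rw [Finset.sum_congr rfl h, Finset.sum_sub_distrib, Finset.sum_add_distrib,
    Finset.sum_ite_eq', ← Finset.mul_sum]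
  by_cases hki : k = i <;> simp [hki]

section
include hdet hsymm
lemma sum_gV' (x : Fin d → ℝ) (i : Fin d) :
    ∑ l, g x i l * Vfun g ω l x = vfun ω i x := by
  have h : ∀ l ∈ (Finset.univ : Finset (Fin d)),
      g x i l * Vfun g ω l x = g x l i * Vfun g ω l x := by
    intro l _; rw [hsymm x i l]
  rw [Finset.sum_congr rfl h, sum_gV hdet hsymm x i]

lemma trace_c (x : Fin d → ℝ) (l : Fin d) :
    ∑ k, cC g ω x k k l = (d : ℝ) * vfun ω l x := by
  have h : ∀ k ∈ (Finset.univ : Finset (Fin d)), cC g ω x k k l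
      = (vfun ω l x + (if k = l then vfun ω k x else 0)) - g x k l * Vfun g ω k x := by
    intro k _; unfold cC; simp
  rw [Finset.sum_congr rfl h, Finset.sum_sub_distrib, Finset.sum_add_distrib,
    Finset.sum_ite_eq', sum_gV hdet hsymm x l]
  simp [Finset.card_univ, mul_comm]
end

end Sec6

-- SEC7 marker
/-- `H_{ij} = ∇_i v_j`, the Hessian of `log ω` -/
def Hconf {d : ℕ} (g : (Fin d → ℝ) → Fin d → Fin d → ℝ) (ω : (Fin d → ℝ) → ℝ)
    (x : Fin d → ℝ) (i j : Fin d) : ℝ :=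
  pd i (vfun ω j) x - ∑ k, christoffel g x k i j * vfun ω k x

/-- `S = div V`, the Laplacian of `log ω` -/
def Sconf {d : ℕ} (g : (Fin d → ℝ) → Fin d → Fin d → ℝ) (ω : (Fin d → ℝ) → ℝ)
    (x : Fin d → ℝ) : ℝ :=
  ∑ k, pd k (Vfun g ω k) x + ∑ k, ∑ l, christoffel g x k k l * Vfun g ω l x

/-- `|v|² = v_k V^k` -/
def nvv {d : ℕ} (g : (Fin d → ℝ) → Fin d → Fin d → ℝ) (ω : (Fin d → ℝ) → ℝ)
    (x : Fin d → ℝ) : ℝ :=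
  ∑ k, vfun ω k x * Vfun g ω k x

section Sec7
variable {d : ℕ} {g : (Fin d → ℝ) → Fin d → Fin d → ℝ} {ω : (Fin d → ℝ) → ℝ}
variable (hg : ContDiff ℝ (⊤ : ℕ∞) g) (hdet : ∀ x, IsUnit (Matrix.of (g x)).det)
  (hsymm : ∀ x i j, g x i j = g x j i)
  (hω : ContDiff ℝ (⊤ : ℕ∞) ω) (hω0 : ∀ x, ω x ≠ 0)

section
include hg hdet hsymm hω hω0

lemma sum_pd_c1 (x : Fin d → ℝ) (i j : Fin d) :
    ∑ k, pd k (fun y => cC g ω y k i j) x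
      = pd i (vfun ω j) x + pd j (vfun ω i) x
        - ∑ k, pd k (fun y => g y i j) x * Vfun g ω k x
        - g x i j * ∑ k, pd k (Vfun g ω k) x := by
  rw [Finset.sum_congr rfl fun k _ => pd_cC hg hdet hω hω0 x k k i j]
  rw [Finset.sum_sub_distrib, Finset.sum_add_distrib, Finset.sum_ite_eq',
    Finset.sum_ite_eq', Finset.sum_add_distrib, ← Finset.mul_sum]
  simp only [Finset.mem_univ, if_true]
  ring

lemma sum_pd_c2 (x : Fin d → ℝ) (i j : Fin d) :
    ∑ k, pd i (fun y => cC g ω y k k j) x = (d : ℝ) * pd i (vfun ω j) x := by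
  rw [Finset.sum_congr rfl fun k _ => pd_cC hg hdet hω hω0 x i k k j]
  have hmul : ∀ k ∈ (Finset.univ : Finset (Fin d)),
      pd i (fun y => g y k j) x * Vfun g ω k x + g x k j * pd i (Vfun g ω k) x
        = pd i (fun y => g y k j * Vfun g ω k y) x := by
    intro k _
    exact (pd_mul ((contDiff_entry hg k j).differentiable (by simp) x)
      ((contDiff_V hg hdet hω hω0 k).differentiable (by simp) x) i).symm
  rw [Finset.sum_sub_distrib, Finset.sum_congr rfl hmul,
    ← pd_sum (F := fun k y => g y k j * Vfun g ω k y) (fun k _ => ((contDiff_entry hg k j).differentiable (by simp) x).mul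
      ((contDiff_V hg hdet hω hω0 k).differentiable (by simp) x)) i]
  have hfun : (fun y => ∑ k, g y k j * Vfun g ω k y) = vfun ω j := by
    funext y; exact sum_gV hdet hsymm y j
  rw [hfun, Finset.sum_add_distrib, Finset.sum_ite_eq']
  simp only [Finset.mem_univ, if_true, Finset.sum_const, Finset.card_univ,
    Fintype.card_fin, nsmul_eq_mul]
  ring

/-- The conformal transformation of the Ricci tensor. -/
lemma ricci_conf (x : Fin d → ℝ) (i j : Fin d) :
    ricciT (fun y a b => ω y ^ 2 * g y a b) x i j
      = ricciT g x i j
        - ((d : ℝ) - 2) * (Hconf g ω x i j - vfun ω i x * vfun ω j x)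
        - (Sconf g ω x + ((d : ℝ) - 2) * nvv g ω x) * g x i j := by
  have dΓ : ∀ (k a b : Fin d), DifferentiableAt ℝ (fun y => christoffel g y k a b) x :=
    fun k a b => (contDiff_christoffel hg hdet k a b).differentiable (by simp) x
  have dc : ∀ (k a b : Fin d), DifferentiableAt ℝ (fun y => cC g ω y k a b) x :=
    fun k a b => (contDiff_cC hg hdet hω hω0 k a b).differentiable (by simp) x
  have hΓfun : ∀ (k a b : Fin d), (fun y => christoffel (fun z p q => ω z ^ 2 * g z p q) y k a b)
      = fun y => christoffel g y k a b + cC g ω y k a b :=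
    fun k a b => funext fun y => christoffel_conf hg hdet hω hω0 y k a b
  unfold ricciT
  have hd1 : ∀ k ∈ (Finset.univ : Finset (Fin d)),
      pd k (fun y => christoffel (fun z p q => ω z ^ 2 * g z p q) y k i j) x
        - pd i (fun y => christoffel (fun z p q => ω z ^ 2 * g z p q) y k k j) x
      = (pd k (fun y => christoffel g y k i j) x - pd i (fun y => christoffel g y k k j) x)
        + (pd k (fun y => cC g ω y k i j) x - pd i (fun y => cC g ω y k k j) x) := by
    intro k _
    rw [hΓfun k i j, hΓfun k k j, pd_add (dΓ k i j) (dc k i j) k,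
      pd_add (dΓ k k j) (dc k k j) i]
    ring
  have hprod : ∀ k ∈ (Finset.univ : Finset (Fin d)),
      ∑ l, (christoffel (fun z p q => ω z ^ 2 * g z p q) x k k l *
              christoffel (fun z p q => ω z ^ 2 * g z p q) x l i j
            - christoffel (fun z p q => ω z ^ 2 * g z p q) x k i l *
              christoffel (fun z p q => ω z ^ 2 * g z p q) x l k j)
      = ∑ l, (christoffel g x k k l * christoffel g x l i j
            - christoffel g x k i l * christoffel g x l k j)
        + ((∑ l, christoffel g x k k l * cC g ω x l i j
            + ∑ l, cC g ω x k k l * christoffel g x l i j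
            + ∑ l, cC g ω x k k l * cC g ω x l i j)
          - (∑ l, christoffel g x k i l * cC g ω x l k j
            + ∑ l, cC g ω x k i l * christoffel g x l k j
            + ∑ l, cC g ω x k i l * cC g ω x l k j)) := by
    intro k _
    have hsplit : ∀ l ∈ (Finset.univ : Finset (Fin d)),
        christoffel (fun z p q => ω z ^ 2 * g z p q) x k k l *
            christoffel (fun z p q => ω z ^ 2 * g z p q) x l i j
          - christoffel (fun z p q => ω z ^ 2 * g z p q) x k i l *
            christoffel (fun z p q => ω z ^ 2 * g z p q) x l k j
        = (christoffel g x k k l * christoffel g x l i j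
            - christoffel g x k i l * christoffel g x l k j)
          + ((christoffel g x k k l * cC g ω x l i j
              + cC g ω x k k l * christoffel g x l i j
              + cC g ω x k k l * cC g ω x l i j)
            - (christoffel g x k i l * cC g ω x l k j
              + cC g ω x k i l * christoffel g x l k j
              + cC g ω x k i l * cC g ω x l k j)) := by
      intro l _
      rw [christoffel_conf hg hdet hω hω0 x k k l, christoffel_conf hg hdet hω hω0 x l i j,
        christoffel_conf hg hdet hω hω0 x k i l, christoffel_conf hg hdet hω hω0 x l k j]
      ring
    rw [Finset.sum_congr rfl hsplit]
    simp only [Finset.sum_sub_distrib, Finset.sum_add_distrib]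
  rw [Finset.sum_congr rfl hd1, Finset.sum_congr rfl hprod]
  -- evaluate the six correction double sums
  have hQ2 : ∑ k, ∑ l, christoffel g x k k l * cC g ω x l i j
      = (∑ k, christoffel g x k k i) * vfun ω j x
        + (∑ k, christoffel g x k k j) * vfun ω i x
        - g x i j * ∑ k, ∑ l, christoffel g x k k l * Vfun g ω l x := by
    rw [Finset.sum_congr rfl fun k _ =>
      sum_t_c (t := fun l => christoffel g x k k l) x i j]
    rw [Finset.sum_sub_distrib, Finset.sum_add_distrib, ← Finset.sum_mul,
      ← Finset.sum_mul, ← Finset.mul_sum]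
  have hQ1 : ∑ k, ∑ l, cC g ω x k k l * christoffel g x l i j
      = (d : ℝ) * ∑ k, christoffel g x k i j * vfun ω k x := by
    rw [Finset.sum_comm, Finset.mul_sum]
    refine Finset.sum_congr rfl fun l _ => ?_
    rw [← Finset.sum_mul, trace_c hdet hsymm x l]
    ring
  have hQ3 : ∑ k, ∑ l, cC g ω x k k l * cC g ω x l i j
      = (d : ℝ) * vfun ω i x * vfun ω j x + (d : ℝ) * vfun ω j x * vfun ω i x
        - g x i j * ((d : ℝ) * nvv g ω x) := by
    rw [Finset.sum_congr rfl fun k _ => sum_t_c (t := fun l => cC g ω x k k l) x i j]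
    rw [Finset.sum_sub_distrib, Finset.sum_add_distrib, ← Finset.sum_mul, ← Finset.sum_mul,
      trace_c hdet hsymm x i, trace_c hdet hsymm x j, ← Finset.mul_sum, Finset.sum_comm]
    have hin : ∑ l, ∑ k, cC g ω x k k l * Vfun g ω l x = (d : ℝ) * nvv g ω x := by
      unfold nvv
      rw [Finset.mul_sum]
      refine Finset.sum_congr rfl fun l _ => ?_
      rw [← Finset.sum_mul, trace_c hdet hsymm x l]
      ring
    rw [hin]
  have hQ4 : ∑ k, ∑ l, christoffel g x k i l * cC g ω x l k j
      = (∑ k, christoffel g x k i k) * vfun ω j x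
        + ∑ k, christoffel g x k i j * vfun ω k x
        - ∑ k, g x k j * ∑ l, christoffel g x k i l * Vfun g ω l x := by
    rw [Finset.sum_congr rfl fun k _ =>
      sum_t_c (t := fun l => christoffel g x k i l) x k j]
    rw [Finset.sum_sub_distrib, Finset.sum_add_distrib, ← Finset.sum_mul]
  have hQ5 : ∑ k, ∑ l, cC g ω x k i l * christoffel g x l k j
      = ∑ l, vfun ω l x * christoffel g x l i j
        + vfun ω i x * ∑ k, christoffel g x k k j
        - ∑ k, Vfun g ω k x * ∑ l, g x i l * christoffel g x l k j := by
    rw [Finset.sum_congr rfl fun k _ =>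
      sum_c_t (t := fun l => christoffel g x l k j) x k i]
    rw [Finset.sum_sub_distrib, Finset.sum_add_distrib, Finset.sum_ite_eq', ← Finset.mul_sum]
    simp only [Finset.mem_univ, if_true]
  have hQ6 : ∑ k, ∑ l, cC g ω x k i l * cC g ω x l k j
      = ((d : ℝ) + 2) * (vfun ω i x * vfun ω j x) - 2 * g x i j * nvv g ω x := by
    have e1 : ∑ k, Vfun g ω k x * (g x i k * vfun ω j x)
        = vfun ω i x * vfun ω j x := by
      have h : ∀ k ∈ (Finset.univ : Finset (Fin d)), Vfun g ω k x * (g x i k * vfun ω j x)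
          = (g x i k * Vfun g ω k x) * vfun ω j x := fun k _ => by ring
      rw [Finset.sum_congr rfl h, ← Finset.sum_mul, sum_gV' hdet hsymm x i]
    have e2 : ∑ k, Vfun g ω k x * (g x i j * vfun ω k x) = g x i j * nvv g ω x := by
      unfold nvv
      rw [Finset.mul_sum]
      exact Finset.sum_congr rfl fun k _ => by ring
    have e3 : ∑ k, Vfun g ω k x * (g x k j * vfun ω i x) = vfun ω j x * vfun ω i x := by
      have h : ∀ k ∈ (Finset.univ : Finset (Fin d)), Vfun g ω k x * (g x k j * vfun ω i x)
          = (g x k j * Vfun g ω k x) * vfun ω i x := fun k _ => by ring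
      rw [Finset.sum_congr rfl h, ← Finset.sum_mul, sum_gV hdet hsymm x j]
    have e4 : ∑ k, vfun ω i x * cC g ω x k k j = vfun ω i x * ((d:ℝ) * vfun ω j x) := by
      rw [← Finset.mul_sum, trace_c hdet hsymm x j]
    rw [Finset.sum_congr rfl fun k _ => sum_c_t (t := fun l => cC g ω x l k j) x k i]
    have h1 : ∀ k ∈ (Finset.univ : Finset (Fin d)),
        (if k = i then ∑ l, vfun ω l x * cC g ω x l k j else 0)
          + vfun ω i x * cC g ω x k k j
          - Vfun g ω k x * ∑ l, g x i l * cC g ω x l k j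
        = (if k = i then vfun ω k x * vfun ω j x + vfun ω j x * vfun ω k x
              - g x k j * nvv g ω x else 0)
          + vfun ω i x * cC g ω x k k j
          - (Vfun g ω k x * (g x i k * vfun ω j x) + Vfun g ω k x * (g x i j * vfun ω k x)
            - Vfun g ω k x * (g x k j * vfun ω i x)) := by
      intro k _
      rw [sum_t_c (t := fun l => vfun ω l x) x k j, sum_t_c (t := fun l => g x i l) x k j,
        sum_gV' hdet hsymm x i]
      unfold nvv
      by_cases hki : k = i
      · subst hki; simp only [if_true]; ring
      · simp only [hki, if_false]; ring
    rw [Finset.sum_congr rfl h1, Finset.sum_sub_distrib, Finset.sum_add_distrib,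
      Finset.sum_ite_eq', Finset.sum_sub_distrib, Finset.sum_add_distrib, e1, e2, e3, e4]
    simp only [Finset.mem_univ, if_true]
    ring
  have hT45 : (∑ k, g x k j * ∑ l, christoffel g x k i l * Vfun g ω l x)
      + ∑ k, Vfun g ω k x * ∑ l, g x i l * christoffel g x l k j
      = ∑ k, pd k (fun y => g y i j) x * Vfun g ω k x := by
    have h1 : ∀ k ∈ (Finset.univ : Finset (Fin d)),
        g x k j * ∑ l, christoffel g x k i l * Vfun g ω l x
          = ∑ l, (christoffel g x k l i * g x k j) * Vfun g ω l x := by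
      intro k _
      rw [Finset.mul_sum]
      refine Finset.sum_congr rfl fun l _ => ?_
      rw [christoffel_symm hsymm x k i l]
      ring
    have h2 : ∀ k ∈ (Finset.univ : Finset (Fin d)),
        Vfun g ω k x * ∑ l, g x i l * christoffel g x l k j
          = (∑ l, g x i l * christoffel g x l k j) * Vfun g ω k x := fun k _ => by ring
    rw [Finset.sum_congr rfl h1, Finset.sum_comm, Finset.sum_congr rfl h2,
      Finset.sum_congr rfl (fun l (_ : l ∈ Finset.univ) =>
        (Finset.sum_mul Finset.univ (fun k => christoffel g x k l i * g x k j)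
          (Vfun g ω l x)).symm),
      ← Finset.sum_add_distrib]
    refine Finset.sum_congr rfl fun m _ => ?_
    rw [← compat hg hdet hsymm x m i j]
    ring
  have hb1 : (∑ k, christoffel g x k i k) = ∑ k, christoffel g x k k i :=
    Finset.sum_congr rfl fun k _ => christoffel_symm hsymm x k i k
  have hb0 : (∑ l, vfun ω l x * christoffel g x l i j)
      = ∑ k, christoffel g x k i j * vfun ω k x :=
    Finset.sum_congr rfl fun l _ => mul_comm _ _
  simp only [Finset.sum_add_distrib, Finset.sum_sub_distrib]
  rw [sum_pd_c1 hg hdet hsymm hω hω0 x i j, sum_pd_c2 hg hdet hsymm hω hω0 x i j,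
    hQ2, hQ1, hQ3, hQ4, hQ5, hQ6, hb1, hb0, pd_v_symm hg hdet hω hω0 x j i]
  unfold Hconf Sconf nvv
  linear_combination hT45
end
end Sec7

-- SEC8 marker
section Sec8
variable {d : ℕ} {g : (Fin d → ℝ) → Fin d → Fin d → ℝ} {ω f : (Fin d → ℝ) → ℝ}
variable (hg : ContDiff ℝ (⊤ : ℕ∞) g) (hdet : ∀ x, IsUnit (Matrix.of (g x)).det)
  (hsymm : ∀ x i j, g x i j = g x j i)
  (hω : ContDiff ℝ (⊤ : ℕ∞) ω) (hω0 : ∀ x, ω x ≠ 0)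

section
include hdet hsymm
lemma trace_mg (x : Fin d → ℝ) : ∑ a, ∑ b, minv g x a b * g x a b = (d : ℝ) := by
  have h : ∀ a ∈ (Finset.univ : Finset (Fin d)),
      ∑ b, minv g x a b * g x a b = 1 := by
    intro a _
    have h2 : ∀ b ∈ (Finset.univ : Finset (Fin d)),
        minv g x a b * g x a b = minv g x a b * g x b a := by
      intro b _; rw [hsymm x a b]
    rw [Finset.sum_congr rfl h2, minv_mul hdet x a a]
    simp
  rw [Finset.sum_congr rfl h]
  simp [Finset.card_univ]
end

lemma sum_m_vv (x : Fin d → ℝ) :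
    ∑ a, ∑ b, minv g x a b * (vfun ω a x * vfun ω b x) = nvv g ω x := by
  unfold nvv
  refine Finset.sum_congr rfl fun a _ => ?_
  unfold Vfun
  rw [Finset.mul_sum]
  exact Finset.sum_congr rfl fun b _ => by ring

section
include hg hdet hsymm hω hω0
/-- Conformal transformation of the scalar curvature. -/
lemma scal_conf (x : Fin d → ℝ) :
    scalT (fun y a b => ω y ^ 2 * g y a b) x
      = (ω x ^ 2)⁻¹ * (scalT g x
          - ((d : ℝ) - 2) * ((∑ a, ∑ b, minv g x a b * Hconf g ω x a b) - nvv g ω x)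
          - (d : ℝ) * (Sconf g ω x + ((d : ℝ) - 2) * nvv g ω x)) := by
  unfold scalT
  have h1 : (∑ a, ∑ b, minv (fun y p q => ω y ^ 2 * g y p q) x a b
        * ricciT (fun y p q => ω y ^ 2 * g y p q) x a b)
      = ∑ a, ∑ b, ((ω x ^ 2)⁻¹ * (minv g x a b * ricciT g x a b)
          - ((ω x ^ 2)⁻¹ * ((d : ℝ) - 2)) * (minv g x a b * Hconf g ω x a b)
          + ((ω x ^ 2)⁻¹ * ((d : ℝ) - 2)) * (minv g x a b * (vfun ω a x * vfun ω b x))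
          - ((ω x ^ 2)⁻¹ * (Sconf g ω x + ((d : ℝ) - 2) * nvv g ω x))
              * (minv g x a b * g x a b)) :=
    Finset.sum_congr rfl fun a _ => Finset.sum_congr rfl fun b _ => by
      rw [minv_smul hdet hω0 x a b, ricci_conf hg hdet hsymm hω hω0 x a b]; ring
  rw [h1]
  simp only [Finset.sum_add_distrib, Finset.sum_sub_distrib, ← Finset.mul_sum]
  rw [sum_m_vv, trace_mg hdet hsymm x]
  ring

lemma pdω_eq (x : Fin d → ℝ) (a : Fin d) : pd a ω x = ω x * vfun ω a x := by
  unfold vfun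
  rw [mul_div_cancel₀ _ (hω0 x)]

lemma Hconf_eq (x : Fin d → ℝ) (a b : Fin d) :
    Hconf g ω x a b = hessT g ω x a b / ω x - vfun ω a x * vfun ω b x := by
  unfold Hconf hessT
  have hs : ∑ k, christoffel g x k a b * vfun ω k x
      = (∑ k, christoffel g x k a b * pd k ω x) / ω x := by
    rw [Finset.sum_div]
    exact Finset.sum_congr rfl fun k _ => by unfold vfun; ring
  have hvb : vfun ω b = fun y => pd b ω y / ω y := rfl
  rw [hs, hvb, pd_div ((contDiff_pd hω b).differentiable (by simp) x)
    (hω.differentiable (by simp) x) (hω0 x) a]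
  unfold vfun
  field_simp [hω0 x]
  ring
end

section
include hg hω
variable (hf : ContDiff ℝ (⊤ : ℕ∞) f)
include hf
lemma hess_leibniz (x : Fin d → ℝ) (a b : Fin d) :
    hessT g (fun y => ω y * f y) x a b
      = ω x * hessT g f x a b + f x * hessT g ω x a b
        + pd a ω x * pd b f x + pd b ω x * pd a f x := by
  unfold hessT
  have h1 : pd b (fun z => ω z * f z)
      = fun y => pd b ω y * f y + ω y * pd b f y :=
    funext fun y => pd_mul (hω.differentiable (by simp) y) (hf.differentiable (by simp) y) b
  have h2 : ∀ k ∈ (Finset.univ : Finset (Fin d)),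
      christoffel g x k a b * pd k (fun y => ω y * f y) x
        = ω x * (christoffel g x k a b * pd k f x)
          + f x * (christoffel g x k a b * pd k ω x) := by
    intro k _
    rw [pd_mul (hω.differentiable (by simp) x) (hf.differentiable (by simp) x) k]
    ring
  rw [h1, pd_add (((contDiff_pd hω b).mul hf).differentiable (by simp) x)
      ((hω.mul (contDiff_pd hf b)).differentiable (by simp) x) a,
    pd_mul ((contDiff_pd hω b).differentiable (by simp) x) (hf.differentiable (by simp) x) a,
    pd_mul (hω.differentiable (by simp) x) ((contDiff_pd hf b).differentiable (by simp) x) a,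
    Finset.sum_congr rfl h2, Finset.sum_add_distrib, ← Finset.mul_sum, ← Finset.mul_sum,
    pd_comm hf a b, pd_comm hω a b]
  ring
end

end Sec8

-- SEC9 marker
section Sec9
variable {d : ℕ} {g : (Fin d → ℝ) → Fin d → Fin d → ℝ} {ω f : (Fin d → ℝ) → ℝ}
variable (hd : 3 ≤ d) (hg : ContDiff ℝ (⊤ : ℕ∞) g) (hdet : ∀ x, IsUnit (Matrix.of (g x)).det)
  (hsymm : ∀ x i j, g x i j = g x j i)
  (hf : ContDiff ℝ (⊤ : ℕ∞) f) (hω : ContDiff ℝ (⊤ : ℕ∞) ω) (hω0 : ∀ x, ω x ≠ 0)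

include hd hg hdet hsymm hf hω hω0

lemma main_id (x : Fin d → ℝ) (a b : Fin d) :
    hessT (fun y p q => ω y ^ 2 * g y p q) (fun y => ω y * f y) x a b
      + (ω x * f x) * schoutenT (fun y p q => ω y ^ 2 * g y p q) x a b
    = ω x * (hessT g f x a b + f x * schoutenT g x a b)
      + ((∑ k, Vfun g ω k x * pd k (fun y => ω y * f y) x)
          + ω x * f x * (((∑ p, ∑ q, minv g x p q * Hconf g ω x p q)
              - Sconf g ω x - ((d : ℝ) - 1) * nvv g ω x) / (2 * ((d : ℝ) - 1))))
        * g x a b := by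
  have hd' : (3 : ℝ) ≤ (d : ℝ) := by exact_mod_cast hd
  have hd2 : ((d : ℝ) - 2) ≠ 0 := by linarith
  have hd1 : ((d : ℝ) - 1) ≠ 0 := by linarith
  rw [hess_conf hg hdet hω hω0 (hω.mul hf) x a b, hess_leibniz hg hω hf x a b]
  unfold schoutenT
  rw [ricci_conf hg hdet hsymm hω hω0 x a b, scal_conf hg hdet hsymm hω hω0 x,
    Hconf_eq hg hdet hsymm hω hω0 x a b,
    pd_mul (hω.differentiable (by simp) x) (hf.differentiable (by simp) x) a,
    pd_mul (hω.differentiable (by simp) x) (hf.differentiable (by simp) x) b,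
    pdω_eq hg hdet hsymm hω hω0 x a, pdω_eq hg hdet hsymm hω hω0 x b]
  simp only []
  field_simp [hω0 x]
  ring

theorem conformal_covariance_Aop' :
    ∀ x i j, Aop (fun y a b => ω y ^ 2 * g y a b) (fun y => ω y * f y) x i j
      = ω x * Aop g f x i j := by
  intro x i j
  have hd0 : ((d : ℝ)) ≠ 0 := by
    have : (3 : ℝ) ≤ (d : ℝ) := by exact_mod_cast hd
    linarith
  unfold Aop tfT
  set C := (∑ k, Vfun g ω k x * pd k (fun y => ω y * f y) x)
      + ω x * f x * (((∑ p, ∑ q, minv g x p q * Hconf g ω x p q)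
          - Sconf g ω x - ((d : ℝ) - 1) * nvv g ω x) / (2 * ((d : ℝ) - 1))) with hC
  have hT : ∀ a b : Fin d,
      hessT (fun y p q => ω y ^ 2 * g y p q) (fun y => ω y * f y) x a b
        + (ω x * f x) * schoutenT (fun y p q => ω y ^ 2 * g y p q) x a b
      = ω x * (hessT g f x a b + f x * schoutenT g x a b) + C * g x a b :=
    fun a b => main_id hd hg hdet hsymm hf hω hω0 x a b
  have hsum : (∑ a, ∑ b, minv (fun y p q => ω y ^ 2 * g y p q) x a b *
        (hessT (fun y p q => ω y ^ 2 * g y p q) (fun y => ω y * f y) x a b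
          + (ω x * f x) * schoutenT (fun y p q => ω y ^ 2 * g y p q) x a b))
      = (ω x ^ 2)⁻¹ * (ω x * ∑ a, ∑ b, minv g x a b *
            (hessT g f x a b + f x * schoutenT g x a b)
          + C * (d : ℝ)) := by
    have h1 : ∀ a ∈ (Finset.univ : Finset (Fin d)), ∀ b ∈ (Finset.univ : Finset (Fin d)),
        minv (fun y p q => ω y ^ 2 * g y p q) x a b *
          (hessT (fun y p q => ω y ^ 2 * g y p q) (fun y => ω y * f y) x a b
            + (ω x * f x) * schoutenT (fun y p q => ω y ^ 2 * g y p q) x a b)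
        = ((ω x ^ 2)⁻¹ * ω x) * (minv g x a b * (hessT g f x a b + f x * schoutenT g x a b))
          + ((ω x ^ 2)⁻¹ * C) * (minv g x a b * g x a b) := by
      intro a _ b _
      rw [minv_smul hdet hω0 x a b, hT a b]
      ring
    rw [Finset.sum_congr rfl fun a ha => Finset.sum_congr rfl fun b hb => h1 a ha b hb]
    simp only [Finset.sum_add_distrib, ← Finset.mul_sum]
    rw [trace_mg hdet hsymm x]
    ring
  simp only []
  rw [hT i j, hsum]
  field_simp [hω0 x]
  ring
end Sec9

/-- conformal covariance `A_{ω²g}(ω f) = ω · A_g(f)` for any nowhere-vanishing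
smooth function `ω`, on a semi-Riemannian manifold of dimension `d ≥ 3`. -/
theorem conformal_covariance_Aop {d : ℕ} (hd : 3 ≤ d)
    (g : (Fin d → ℝ) → Fin d → Fin d → ℝ) (f ω : (Fin d → ℝ) → ℝ)
    (hg : ContDiff ℝ (⊤ : ℕ∞) g) (hsymm : ∀ x i j, g x i j = g x j i)
    (hdet : ∀ x, IsUnit (Matrix.of (g x)).det)
    (hf : ContDiff ℝ (⊤ : ℕ∞) f) (hω : ContDiff ℝ (⊤ : ℕ∞) ω) (hω0 : ∀ x, ω x ≠ 0) :
    ∀ x i j, Aop (fun y a b => ω y ^ 2 * g y a b) (fun y => ω y * f y) x i j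
      = ω x * Aop g f x i j :=
  conformal_covariance_Aop' hd hg hdet hsymm hf hω hω0
end
end

section
/- If (M,g,Ω) is quasi-Einstein and ω is a nowhere-vanishing smooth function, then (M, ω²g, ωΩ) is also quasi-Einstein. -/
noncomputable section
open scoped BigOperators

/-- The quasi-Einstein condition `Hess_g Ω + Ω Sch_g - 𝔰 g = 0`, `𝔰 = d⁻¹(□_gΩ + Ω L)`. -/
def QuasiEinstein {d : ℕ} (g : (Fin d → ℝ) → Fin d → Fin d → ℝ)
    (Ω : (Fin d → ℝ) → ℝ) : Prop :=
  ∀ x i j, hessT g Ω x i j + Ω x * schoutenT g x i j - sQE g Ω x * g x i j = 0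

namespace QEAux
variable {d : ℕ}

theorem pd_congr {f h : (Fin d → ℝ) → ℝ} (hfh : ∀ y, f y = h y) (i : Fin d) (x : Fin d → ℝ) :
    pd i f x = pd i h x := by
  have : f = h := funext hfh
  rw [this]

@[simp] theorem pd_const (i : Fin d) (c : ℝ) (x : Fin d → ℝ) : pd i (fun _ => c) x = 0 := by
  simp [pd]

theorem pd_add {f h : (Fin d → ℝ) → ℝ} {x : Fin d → ℝ} (i : Fin d)
    (hf : DifferentiableAt ℝ f x) (hh : DifferentiableAt ℝ h x) :
    pd i (fun y => f y + h y) x = pd i f x + pd i h x := by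
  simp [pd, fderiv_fun_add hf hh]

theorem pd_sub {f h : (Fin d → ℝ) → ℝ} {x : Fin d → ℝ} (i : Fin d)
    (hf : DifferentiableAt ℝ f x) (hh : DifferentiableAt ℝ h x) :
    pd i (fun y => f y - h y) x = pd i f x - pd i h x := by
  simp [pd, fderiv_fun_sub hf hh]

theorem pd_mul {f h : (Fin d → ℝ) → ℝ} {x : Fin d → ℝ} (i : Fin d)
    (hf : DifferentiableAt ℝ f x) (hh : DifferentiableAt ℝ h x) :
    pd i (fun y => f y * h y) x = pd i f x * h x + f x * pd i h x := by
  simp [pd, fderiv_fun_mul hf hh]; ring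

theorem pd_cmul {f : (Fin d → ℝ) → ℝ} {x : Fin d → ℝ} (i : Fin d) (c : ℝ)
    (hf : DifferentiableAt ℝ f x) :
    pd i (fun y => c * f y) x = c * pd i f x := by
  simp [pd, fderiv_const_mul hf c]

theorem pd_sum {ι : Type*} (s : Finset ι) {f : ι → (Fin d → ℝ) → ℝ} {x : Fin d → ℝ} (i : Fin d)
    (hf : ∀ k ∈ s, DifferentiableAt ℝ (f k) x) :
    pd i (fun y => ∑ k ∈ s, f k y) x = ∑ k ∈ s, pd i (f k) x := by
  simp [pd, fderiv_fun_sum hf]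

theorem pd_inv {f : (Fin d → ℝ) → ℝ} {x : Fin d → ℝ} (i : Fin d)
    (hf : DifferentiableAt ℝ f x) (h0 : f x ≠ 0) :
    pd i (fun y => (f y)⁻¹) x = -pd i f x / f x ^ 2 := by
  have h1 : DifferentiableAt ℝ (Inv.inv : ℝ → ℝ) (f x) := differentiableAt_inv h0
  have h2 : (fun y => (f y)⁻¹) = (Inv.inv : ℝ → ℝ) ∘ f := rfl
  rw [pd, h2, fderiv_comp x h1 hf]
  rw [fderiv_inv' (𝕜 := ℝ) h0]
  simp [ContinuousLinearMap.mulLeftRight_apply]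
  field_simp
  unfold pd
  ring


section Smooth
variable {g : (Fin d → ℝ) → Fin d → Fin d → ℝ}

theorem entry_cd (hg : ContDiff ℝ (⊤ : ℕ∞) g) (i j : Fin d) : ContDiff ℝ (⊤ : ℕ∞) fun y => g y i j :=
  (contDiff_pi.mp ((contDiff_pi.mp hg) i)) j

theorem det_cd {M : (Fin d → ℝ) → Matrix (Fin d) (Fin d) ℝ}
    (hM : ∀ a b, ContDiff ℝ (⊤ : ℕ∞) fun y => M y a b) :
    ContDiff ℝ (⊤ : ℕ∞) fun y => (M y).det := by
  have h : ∀ y, (M y).det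
      = ∑ σ : Equiv.Perm (Fin d), ((Equiv.Perm.sign σ : ℤ) : ℝ) * ∏ i, M y (σ i) i := by
    intro y; rw [Matrix.det_apply]; simp [Units.smul_def, zsmul_eq_mul]
  simp only [h]
  exact ContDiff.sum fun σ _ => contDiff_const.mul (contDiff_prod fun i _ => hM (σ i) i)

theorem minv_cd (hg : ContDiff ℝ (⊤ : ℕ∞) g) (hdet : ∀ x, IsUnit (Matrix.of (g x)).det) (i j : Fin d) :
    ContDiff ℝ (⊤ : ℕ∞) fun y => minv g y i j := by
  have h1 : ∀ y, minv g y i j = ((Matrix.of (g y)).det)⁻¹ * (Matrix.of (g y)).adjugate i j := by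
    intro y
    rw [minv, Matrix.inv_def, Matrix.smul_apply, Ring.inverse_eq_inv, smul_eq_mul]
  simp only [h1]
  have hdetcd : ContDiff ℝ (⊤ : ℕ∞) fun y => (Matrix.of (g y)).det := det_cd fun a b => entry_cd hg a b
  have hadj : ContDiff ℝ (⊤ : ℕ∞) fun y => (Matrix.of (g y)).adjugate i j := by
    have h2 : ∀ y, (Matrix.of (g y)).adjugate i j
        = ((Matrix.of (g y)).updateRow j (Pi.single i 1)).det := by
      intro y; rw [Matrix.adjugate_apply]
    simp only [h2]
    refine det_cd fun a b => ?_
    by_cases hab : a = j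
    · simp only [Matrix.updateRow_apply, hab, if_pos]
      exact contDiff_const
    · simp only [Matrix.updateRow_apply, hab, if_false]
      exact entry_cd hg a b
  exact (hdetcd.inv fun y => (hdet y).ne_zero).mul hadj

theorem pd_cd {f : (Fin d → ℝ) → ℝ} (hf : ContDiff ℝ (⊤ : ℕ∞) f) (i : Fin d) :
    ContDiff ℝ (⊤ : ℕ∞) fun y => pd i f y :=
  (hf.fderiv_right (by simp)).clm_apply contDiff_const

theorem cd_diff {f : (Fin d → ℝ) → ℝ} (hf : ContDiff ℝ (⊤ : ℕ∞) f) (x : Fin d → ℝ) :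
    DifferentiableAt ℝ f x :=
  (hf.differentiable (by simp)).differentiableAt

theorem pd_comm {f : (Fin d → ℝ) → ℝ} (hf : ContDiff ℝ (⊤ : ℕ∞) f) (i j : Fin d) (x : Fin d → ℝ) :
    pd i (pd j f) x = pd j (pd i f) x := by
  have hs : IsSymmSndFDerivAt ℝ f x :=
    hf.contDiffAt.isSymmSndFDerivAt (by rw [minSmoothness_of_isRCLikeNormedField]; exact WithTop.coe_le_coe.mpr le_top)
  have hd : DifferentiableAt ℝ (fderiv ℝ f) x :=
    ((hf.fderiv_right (m := 1) (WithTop.coe_le_coe.mpr le_top)).differentiable one_ne_zero).differentiableAt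
  have key : ∀ a b : Fin d, pd a (pd b f) x
      = fderiv ℝ (fderiv ℝ f) x (Pi.single a 1) (Pi.single b 1) := by
    intro a b
    have : pd a (pd b f) x
        = fderiv ℝ (fun y => (fderiv ℝ f y) (Pi.single b 1)) x (Pi.single a 1) := rfl
    rw [this, fderiv_clm_apply hd (differentiableAt_const _)]
    simp [ContinuousLinearMap.add_apply, ContinuousLinearMap.comp_apply,
      ContinuousLinearMap.flip_apply]
  rw [key i j, key j i, hs]

end Smooth

section Inverse
variable {g : (Fin d → ℝ) → Fin d → Fin d → ℝ}

theorem minv_mul (hdet : ∀ x, IsUnit (Matrix.of (g x)).det) (x : Fin d → ℝ) (i j : Fin d) :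
    ∑ k, minv g x i k * g x k j = if i = j then 1 else 0 := by
  have h := Matrix.nonsing_inv_mul (Matrix.of (g x)) (hdet x)
  have h2 : ((Matrix.of (g x))⁻¹ * Matrix.of (g x)) i j = (1 : Matrix (Fin d) (Fin d) ℝ) i j := by
    rw [h]
  rw [Matrix.mul_apply] at h2
  simpa [minv, Matrix.one_apply] using h2

theorem minv_symm (hsymm : ∀ x i j, g x i j = g x j i) (x : Fin d → ℝ) (i j : Fin d) :
    minv g x i j = minv g x j i := by
  have ht : Matrix.transpose (Matrix.of (g x)) = Matrix.of (g x) := by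
    ext a b; simp [Matrix.transpose_apply]; exact (hsymm x b a)
  have h := Matrix.transpose_nonsing_inv (Matrix.of (g x))
  rw [ht] at h
  have h2 : Matrix.transpose ((Matrix.of (g x))⁻¹) j i = (Matrix.of (g x))⁻¹ j i := by rw [h]
  rw [Matrix.transpose_apply] at h2
  unfold minv
  rw [← h2]

end Inverse

section Conformal
variable {g : (Fin d → ℝ) → Fin d → Fin d → ℝ} {ω Ω : (Fin d → ℝ) → ℝ}

/-- `u_i = ∂_i ω / ω`. -/
def uF (ω : (Fin d → ℝ) → ℝ) (i : Fin d) (y : Fin d → ℝ) : ℝ := pd i ω y / ω y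

/-- `u^k = g^{kl} u_l`. -/
def uUp (g : (Fin d → ℝ) → Fin d → Fin d → ℝ) (ω : (Fin d → ℝ) → ℝ)
    (k : Fin d) (y : Fin d → ℝ) : ℝ := ∑ l, minv g y k l * uF ω l y

theorem uF_cd (hω : ContDiff ℝ (⊤ : ℕ∞) ω) (hω0 : ∀ x, ω x ≠ 0) (i : Fin d) :
    ContDiff ℝ (⊤ : ℕ∞) fun y => uF ω i y := by
  unfold uF
  simp only [div_eq_mul_inv]
  exact (pd_cd hω i).mul ((hω.inv hω0))

theorem uUp_cd (hg : ContDiff ℝ (⊤ : ℕ∞) g) (hdet : ∀ x, IsUnit (Matrix.of (g x)).det)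
    (hω : ContDiff ℝ (⊤ : ℕ∞) ω) (hω0 : ∀ x, ω x ≠ 0) (k : Fin d) :
    ContDiff ℝ (⊤ : ℕ∞) fun y => uUp g ω k y := by
  unfold uUp
  exact ContDiff.sum fun l _ => (minv_cd hg hdet k l).mul (uF_cd hω hω0 l)

theorem christoffel_cd (hg : ContDiff ℝ (⊤ : ℕ∞) g) (hdet : ∀ x, IsUnit (Matrix.of (g x)).det)
    (k i j : Fin d) : ContDiff ℝ (⊤ : ℕ∞) fun y => christoffel g y k i j := by
  unfold christoffel
  refine contDiff_const.mul (ContDiff.sum fun l _ => (minv_cd hg hdet k l).mul ?_)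
  exact ((pd_cd (entry_cd hg l j) i).add (pd_cd (entry_cd hg l i) j)).sub
    (pd_cd (entry_cd hg i j) l)

theorem christoffel_symm (hsymm : ∀ x i j, g x i j = g x j i) (x : Fin d → ℝ) (k i j : Fin d) :
    christoffel g x k i j = christoffel g x k j i := by
  unfold christoffel
  congr 1
  refine Finset.sum_congr rfl fun l _ => ?_
  congr 1
  have h3 : pd l (fun y => g y i j) x = pd l (fun y => g y j i) x :=
    pd_congr (fun y => hsymm y i j) l x
  rw [h3]
  ring

theorem conf_minv (hdet : ∀ x, IsUnit (Matrix.of (g x)).det) (hω0 : ∀ x, ω x ≠ 0)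
    (x : Fin d → ℝ) (a b : Fin d) :
    minv (fun y a b => ω y ^ 2 * g y a b) x a b = (ω x ^ 2)⁻¹ * minv g x a b := by
  have hne : (ω x ^ 2) ≠ 0 := pow_ne_zero 2 (hω0 x)
  have h1 : Matrix.of ((fun y a b => ω y ^ 2 * g y a b) x) = (ω x ^ 2) • Matrix.of (g x) := by
    ext p q; simp [Matrix.smul_apply]
  have h2 : (((ω x ^ 2) • Matrix.of (g x)) : Matrix (Fin d) (Fin d) ℝ)⁻¹
      = (ω x ^ 2)⁻¹ • (Matrix.of (g x))⁻¹ := by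
    apply Matrix.inv_eq_right_inv
    rw [Matrix.smul_mul, Matrix.mul_smul, smul_smul, mul_inv_cancel₀ hne, one_smul,
      Matrix.mul_nonsing_inv _ (hdet x)]
  show (Matrix.of ((fun y a b => ω y ^ 2 * g y a b) x))⁻¹ a b = _
  rw [h1, h2, Matrix.smul_apply, smul_eq_mul]
  rfl

theorem conf_pd_entry (hg : ContDiff ℝ (⊤ : ℕ∞) g) (hω : ContDiff ℝ (⊤ : ℕ∞) ω)
    (m a b : Fin d) (x : Fin d → ℝ) :
    pd m (fun y => ω y ^ 2 * g y a b) x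
      = 2 * ω x * pd m ω x * g x a b + ω x ^ 2 * pd m (fun y => g y a b) x := by
  have h1 : ∀ y : Fin d → ℝ, ω y ^ 2 * g y a b = (ω y * ω y) * g y a b := by
    intro y; ring
  rw [pd_congr h1]
  rw [pd_mul m ((cd_diff hω x).fun_mul (cd_diff hω x)) (cd_diff (entry_cd hg a b) x),
    pd_mul m (cd_diff hω x) (cd_diff hω x)]
  ring

/-- Conformal transformation of the Christoffel symbols. -/
theorem conf_christoffel (hg : ContDiff ℝ (⊤ : ℕ∞) g) (hdet : ∀ x, IsUnit (Matrix.of (g x)).det)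
    (hω : ContDiff ℝ (⊤ : ℕ∞) ω) (hω0 : ∀ x, ω x ≠ 0) (x : Fin d → ℝ) (k i j : Fin d) :
    christoffel (fun y a b => ω y ^ 2 * g y a b) x k i j
      = christoffel g x k i j + ((if k = j then uF ω i x else 0)
          + (if k = i then uF ω j x else 0) - g x i j * uUp g ω k x) := by
  have hne : ω x ≠ 0 := hω0 x
  unfold christoffel
  have hstep : ∀ l : Fin d,
      minv (fun y a b => ω y ^ 2 * g y a b) x k l *
        (pd i (fun y => ω y ^ 2 * g y l j) x + pd j (fun y => ω y ^ 2 * g y l i) x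
          - pd l (fun y => ω y ^ 2 * g y i j) x)
      = minv g x k l * (pd i (fun y => g y l j) x + pd j (fun y => g y l i) x
          - pd l (fun y => g y i j) x)
        + 2 * (uF ω i x * (minv g x k l * g x l j) + uF ω j x * (minv g x k l * g x l i)
          - (minv g x k l * uF ω l x) * g x i j) := by
    intro l
    rw [conf_minv hdet hω0, conf_pd_entry hg hω, conf_pd_entry hg hω, conf_pd_entry hg hω]
    unfold uF
    field_simp
    ring
  rw [Finset.sum_congr rfl fun l _ => hstep l, Finset.sum_add_distrib]
  rw [mul_add]
  congr 1
  have e1 : ∑ l, (minv g x k l * g x l j) = if k = j then (1:ℝ) else 0 := minv_mul hdet x k j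
  have e2 : ∑ l, (minv g x k l * g x l i) = if k = i then (1:ℝ) else 0 := minv_mul hdet x k i
  have e3 : ∑ l, (minv g x k l * uF ω l x) = uUp g ω k x := rfl
  have expand : ∑ l, 2 * (uF ω i x * (minv g x k l * g x l j) + uF ω j x * (minv g x k l * g x l i)
      - (minv g x k l * uF ω l x) * g x i j)
      = 2 * (uF ω i x * ∑ l, (minv g x k l * g x l j))
        + 2 * (uF ω j x * ∑ l, (minv g x k l * g x l i))
        - 2 * ((∑ l, (minv g x k l * uF ω l x)) * g x i j) := by
    simp only [Finset.mul_sum, Finset.sum_mul, ← Finset.sum_sub_distrib,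
      ← Finset.sum_add_distrib]
    refine Finset.sum_congr rfl fun l _ => ?_
    ring
  rw [expand, e1, e2, e3]
  have r1 : (if k = j then uF ω i x else 0) = uF ω i x * (if k = j then (1:ℝ) else 0) := by
    simp [mul_ite]
  have r2 : (if k = i then uF ω j x else 0) = uF ω j x * (if k = i then (1:ℝ) else 0) := by
    simp [mul_ite]
  rw [r1, r2]
  ring

end Conformal

section Stage2
variable {g : (Fin d → ℝ) → Fin d → Fin d → ℝ} {ω Ω : (Fin d → ℝ) → ℝ}

theorem pd_ite {f : (Fin d → ℝ) → ℝ} (m : Fin d) (x : Fin d → ℝ) (c : Prop) [Decidable c] :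
    pd m (fun y => if c then f y else 0) x = if c then pd m f x else 0 := by
  split <;> simp

/-- Contract an inverse-metric expression against the metric. -/
theorem contract (hdet : ∀ x, IsUnit (Matrix.of (g x)).det) (hsymm : ∀ x i j, g x i j = g x j i)
    (x : Fin d → ℝ) (j : Fin d) (E : Fin d → ℝ) :
    ∑ l, (∑ m, minv g x l m * E m) * g x l j = E j := by
  calc ∑ l, (∑ m, minv g x l m * E m) * g x l j
      = ∑ m, (∑ l, minv g x m l * g x l j) * E m := by
        simp_rw [Finset.sum_mul]
        rw [Finset.sum_comm]
        refine Finset.sum_congr rfl fun m _ => Finset.sum_congr rfl fun l _ => ?_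
        rw [minv_symm hsymm x l m]
        ring
    _ = ∑ m, (if m = j then (1:ℝ) else 0) * E m := by
        refine Finset.sum_congr rfl fun m _ => ?_
        rw [minv_mul hdet x m j]
    _ = E j := by simp

/-- Contract the metric against an upper index. -/
theorem contract' (hdet : ∀ x, IsUnit (Matrix.of (g x)).det) (hsymm : ∀ x i j, g x i j = g x j i)
    (x : Fin d → ℝ) (j : Fin d) (E : Fin d → ℝ) :
    ∑ k, g x k j * (∑ l, minv g x k l * E l) = E j := by
  calc ∑ k, g x k j * (∑ l, minv g x k l * E l)
      = ∑ k, (∑ l, minv g x k l * E l) * g x k j := by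
        refine Finset.sum_congr rfl fun k _ => ?_; ring
    _ = E j := contract hdet hsymm x j E

theorem pd_entry_symm (hsymm : ∀ x i j, g x i j = g x j i) (m a b : Fin d) (x : Fin d → ℝ) :
    pd m (fun y => g y a b) x = pd m (fun y => g y b a) x :=
  pd_congr (fun y => hsymm y a b) m x

/-- Metric compatibility in coordinates. -/
theorem metric_compat (hg : ContDiff ℝ (⊤ : ℕ∞) g) (hdet : ∀ x, IsUnit (Matrix.of (g x)).det)
    (hsymm : ∀ x i j, g x i j = g x j i) (x : Fin d → ℝ) (k i j : Fin d) :
    pd k (fun y => g y i j) x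
      = ∑ l, (christoffel g x l k i * g x l j + christoffel g x l k j * g x i l) := by
  unfold christoffel
  rw [Finset.sum_add_distrib]
  have h1 : ∑ l, ((1/2) * ∑ m, minv g x l m *
        (pd k (fun y => g y m i) x + pd i (fun y => g y m k) x - pd m (fun y => g y k i) x))
      * g x l j
      = (1/2) * (pd k (fun y => g y j i) x + pd i (fun y => g y j k) x
          - pd j (fun y => g y k i) x) := by
    have := contract hdet hsymm x j (fun m => (1/2) * (pd k (fun y => g y m i) x
      + pd i (fun y => g y m k) x - pd m (fun y => g y k i) x))
    rw [← this]
    refine Finset.sum_congr rfl fun l _ => ?_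
    rw [Finset.mul_sum]
    congr 1
    refine Finset.sum_congr rfl fun m _ => ?_
    ring
  have h2 : ∑ l, ((1/2) * ∑ m, minv g x l m *
        (pd k (fun y => g y m j) x + pd j (fun y => g y m k) x - pd m (fun y => g y k j) x))
      * g x i l
      = (1/2) * (pd k (fun y => g y i j) x + pd j (fun y => g y i k) x
          - pd i (fun y => g y k j) x) := by
    have hc := contract hdet hsymm x i (fun m => (1/2) * (pd k (fun y => g y m j) x
      + pd j (fun y => g y m k) x - pd m (fun y => g y k j) x))
    rw [← hc]
    refine Finset.sum_congr rfl fun l _ => ?_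
    rw [Finset.mul_sum, hsymm x i l]
    congr 1
    refine Finset.sum_congr rfl fun m _ => ?_
    ring
  rw [h1, h2]
  linarith [pd_entry_symm hsymm k j i x, pd_entry_symm hsymm i j k x,
    pd_entry_symm hsymm j k i x]

end Stage2

section Stage3
variable {g : (Fin d → ℝ) → Fin d → Fin d → ℝ} {ω Ω : (Fin d → ℝ) → ℝ}

/-- The conformal correction to the Christoffel symbols. -/
def Cf (g : (Fin d → ℝ) → Fin d → Fin d → ℝ) (ω : (Fin d → ℝ) → ℝ)
    (k i j : Fin d) (y : Fin d → ℝ) : ℝ :=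
  (if k = j then uF ω i y else 0) + (if k = i then uF ω j y else 0) - g y i j * uUp g ω k y

theorem conf_christoffel' (hg : ContDiff ℝ (⊤ : ℕ∞) g) (hdet : ∀ x, IsUnit (Matrix.of (g x)).det)
    (hω : ContDiff ℝ (⊤ : ℕ∞) ω) (hω0 : ∀ x, ω x ≠ 0) (x : Fin d → ℝ) (k i j : Fin d) :
    christoffel (fun y a b => ω y ^ 2 * g y a b) x k i j
      = christoffel g x k i j + Cf g ω k i j x :=
  conf_christoffel hg hdet hω hω0 x k i j

theorem Cf_cd (hg : ContDiff ℝ (⊤ : ℕ∞) g) (hdet : ∀ x, IsUnit (Matrix.of (g x)).det)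
    (hω : ContDiff ℝ (⊤ : ℕ∞) ω) (hω0 : ∀ x, ω x ≠ 0) (k i j : Fin d) :
    ContDiff ℝ (⊤ : ℕ∞) fun y => Cf g ω k i j y := by
  unfold Cf
  refine ContDiff.sub (ContDiff.add ?_ ?_) ((entry_cd hg i j).mul (uUp_cd hg hdet hω hω0 k))
  · by_cases h : k = j <;> simp [h]
    · exact uF_cd hω hω0 i
    · exact contDiff_const
  · by_cases h : k = i <;> simp [h]
    · exact uF_cd hω hω0 j
    · exact contDiff_const

theorem pd_uF (hω : ContDiff ℝ (⊤ : ℕ∞) ω) (hω0 : ∀ x, ω x ≠ 0) (m n : Fin d) (x : Fin d → ℝ) :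
    pd m (uF ω n) x = pd m (pd n ω) x / ω x - uF ω m x * uF ω n x := by
  have h1 : ∀ y, uF ω n y = pd n ω y * (ω y)⁻¹ := fun y => div_eq_mul_inv _ _
  rw [pd_congr h1, pd_mul m (cd_diff (pd_cd hω n) x) ((cd_diff hω x).fun_inv (hω0 x)),
    pd_inv m (cd_diff hω x) (hω0 x)]
  unfold uF
  have := hω0 x
  field_simp
  ring

/-- Pointwise trace of the correction tensor over its first two slots. -/
theorem sum_Cf_kk (hdet : ∀ x, IsUnit (Matrix.of (g x)).det)
    (hsymm : ∀ x i j, g x i j = g x j i) (y : Fin d → ℝ) (j : Fin d) :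
    ∑ k, Cf g ω k k j y = (d : ℝ) * uF ω j y := by
  unfold Cf
  rw [Finset.sum_sub_distrib, Finset.sum_add_distrib]
  have h1 : ∑ k, (if k = j then uF ω k y else 0) = uF ω j y := by
    rw [Finset.sum_ite_eq' Finset.univ j (fun k => uF ω k y)]
    simp
  have h2 : ∑ k : Fin d, (if k = k then uF ω j y else 0) = (d : ℝ) * uF ω j y := by
    simp [Finset.card_univ]
  have h3 : ∑ k, g y k j * uUp g ω k y = uF ω j y := by
    unfold uUp
    exact contract' hdet hsymm y j (fun l => uF ω l y)
  rw [h1, h2, h3]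
  ring

/-- Conformal transformation of the Hessian. -/
theorem conf_hess (hg : ContDiff ℝ (⊤ : ℕ∞) g) (hdet : ∀ x, IsUnit (Matrix.of (g x)).det)
    (hω : ContDiff ℝ (⊤ : ℕ∞) ω) (hω0 : ∀ x, ω x ≠ 0) (f : (Fin d → ℝ) → ℝ)
    (x : Fin d → ℝ) (i j : Fin d) :
    hessT (fun y a b => ω y ^ 2 * g y a b) f x i j
      = hessT g f x i j - uF ω i x * pd j f x - uF ω j x * pd i f x
        + g x i j * ∑ l, uUp g ω l x * pd l f x := by
  unfold hessT
  have h1 : ∀ k, christoffel (fun y a b => ω y ^ 2 * g y a b) x k i j * pd k f x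
      = christoffel g x k i j * pd k f x + ((if k = j then uF ω i x else 0) * pd k f x
        + (if k = i then uF ω j x else 0) * pd k f x
        - g x i j * (uUp g ω k x * pd k f x)) := by
    intro k
    rw [conf_christoffel' hg hdet hω hω0]
    unfold Cf
    ring
  rw [Finset.sum_congr rfl fun k _ => h1 k, Finset.sum_add_distrib, Finset.sum_sub_distrib,
    Finset.sum_add_distrib]
  have e1 : ∑ k, (if k = j then uF ω i x else 0) * pd k f x = uF ω i x * pd j f x := by
    rw [Finset.sum_congr rfl (fun k _ => by
      rw [ite_mul] : ∀ k ∈ Finset.univ, (if k = j then uF ω i x else 0) * pd k f x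
        = if k = j then uF ω i x * pd k f x else 0 * pd k f x)]
    simp [Finset.sum_ite_eq']
  have e2 : ∑ k, (if k = i then uF ω j x else 0) * pd k f x = uF ω j x * pd i f x := by
    rw [Finset.sum_congr rfl (fun k _ => by
      rw [ite_mul] : ∀ k ∈ Finset.univ, (if k = i then uF ω j x else 0) * pd k f x
        = if k = i then uF ω j x * pd k f x else 0 * pd k f x)]
    simp [Finset.sum_ite_eq']
  rw [e1, e2, ← Finset.mul_sum]
  ring

/-- Hessian of a product. -/
theorem hess_prod (hg : ContDiff ℝ (⊤ : ℕ∞) g) (hω : ContDiff ℝ (⊤ : ℕ∞) ω) (hΩ : ContDiff ℝ (⊤ : ℕ∞) Ω)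
    (x : Fin d → ℝ) (i j : Fin d) :
    hessT g (fun y => ω y * Ω y) x i j
      = Ω x * hessT g ω x i j + ω x * hessT g Ω x i j
        + pd i ω x * pd j Ω x + pd j ω x * pd i Ω x := by
  unfold hessT
  have h1 : ∀ y, pd j (fun z => ω z * Ω z) y = pd j ω y * Ω y + ω y * pd j Ω y := fun y =>
    pd_mul j (cd_diff hω y) (cd_diff hΩ y)
  have h2 : pd i (pd j fun z => ω z * Ω z) x
      = pd i (pd j ω) x * Ω x + pd j ω x * pd i Ω x
        + (pd i ω x * pd j Ω x + ω x * pd i (pd j Ω) x) := by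
    rw [pd_congr h1, pd_add i ((cd_diff (pd_cd hω j) x).fun_mul (cd_diff hΩ x))
      ((cd_diff hω x).fun_mul (cd_diff (pd_cd hΩ j) x)),
      pd_mul i (cd_diff (pd_cd hω j) x) (cd_diff hΩ x),
      pd_mul i (cd_diff hω x) (cd_diff (pd_cd hΩ j) x)]
  have h3 : ∀ k, christoffel g x k i j * pd k (fun z => ω z * Ω z) x
      = Ω x * (christoffel g x k i j * pd k ω x) + ω x * (christoffel g x k i j * pd k Ω x) := by
    intro k
    rw [pd_mul k (cd_diff hω x) (cd_diff hΩ x)]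
    ring
  rw [h2, Finset.sum_congr rfl fun k _ => h3 k, Finset.sum_add_distrib,
    ← Finset.mul_sum, ← Finset.mul_sum]
  ring

end Stage3

section Stage4
variable {g : (Fin d → ℝ) → Fin d → Fin d → ℝ} {ω Ω : (Fin d → ℝ) → ℝ}

theorem sum_mul_Cf (x : Fin d → ℝ) (F : Fin d → ℝ) (i j : Fin d) :
    ∑ l, F l * Cf g ω l i j x
      = F j * uF ω i x + F i * uF ω j x - g x i j * ∑ l, F l * uUp g ω l x := by
  unfold Cf
  have h : ∀ l, F l * ((if l = j then uF ω i x else 0) + (if l = i then uF ω j x else 0)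
      - g x i j * uUp g ω l x)
      = (if l = j then F l * uF ω i x else 0) + (if l = i then F l * uF ω j x else 0)
        - g x i j * (F l * uUp g ω l x) := by
    intro l
    simp only [mul_add, mul_sub, mul_ite, mul_zero]
    ring
  rw [Finset.sum_congr rfl fun l _ => h l, Finset.sum_sub_distrib, Finset.sum_add_distrib,
    Finset.sum_ite_eq' Finset.univ j (fun l => F l * uF ω i x),
    Finset.sum_ite_eq' Finset.univ i (fun l => F l * uF ω j x), ← Finset.mul_sum]
  simp

theorem sum_Cf_k_k (hdet : ∀ x, IsUnit (Matrix.of (g x)).det)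
    (hsymm : ∀ x i j, g x i j = g x j i) (x : Fin d → ℝ) (i : Fin d) :
    ∑ k, Cf g ω k i k x = (d : ℝ) * uF ω i x := by
  unfold Cf
  rw [Finset.sum_sub_distrib, Finset.sum_add_distrib]
  have h1 : ∑ k : Fin d, (if k = k then uF ω i x else 0) = (d : ℝ) * uF ω i x := by
    simp [Finset.card_univ]
  have h2 : ∑ k, (if k = i then uF ω k x else 0) = uF ω i x := by
    rw [Finset.sum_ite_eq' Finset.univ i (fun k => uF ω k x)]
    simp
  have h3 : ∑ k, g x i k * uUp g ω k x = uF ω i x := by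
    have hr : ∀ k, g x i k * uUp g ω k x = g x k i * uUp g ω k x := fun k => by
      rw [hsymm x i k]
    rw [Finset.sum_congr rfl fun k _ => hr k]
    unfold uUp
    exact contract' hdet hsymm x i (fun l => uF ω l x)
  rw [h1, h2, h3]
  ring

theorem sum_Cf_last (hdet : ∀ x, IsUnit (Matrix.of (g x)).det)
    (hsymm : ∀ x i j, g x i j = g x j i) (x : Fin d → ℝ) (k i : Fin d) :
    ∑ l, Cf g ω k i l x * uUp g ω l x
      = if k = i then ∑ l, uF ω l x * uUp g ω l x else 0 := by
  unfold Cf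
  have h : ∀ l, ((if k = l then uF ω i x else 0) + (if k = i then uF ω l x else 0)
      - g x i l * uUp g ω k x) * uUp g ω l x
      = (if k = l then uF ω i x * uUp g ω l x else 0)
        + (if k = i then uF ω l x * uUp g ω l x else 0)
        - uUp g ω k x * (g x i l * uUp g ω l x) := by
    intro l
    simp only [add_mul, sub_mul, ite_mul, zero_mul]
    ring
  rw [Finset.sum_congr rfl fun l _ => h l, Finset.sum_sub_distrib, Finset.sum_add_distrib,
    Finset.sum_ite_eq Finset.univ k (fun l => uF ω i x * uUp g ω l x), ← Finset.mul_sum]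
  have h3 : ∑ l, g x i l * uUp g ω l x = uF ω i x := by
    have hr : ∀ l, g x i l * uUp g ω l x = g x l i * uUp g ω l x := fun l => by
      rw [hsymm x i l]
    rw [Finset.sum_congr rfl fun l _ => hr l]
    unfold uUp
    exact contract' hdet hsymm x i (fun m => uF ω m x)
  rw [h3]
  by_cases h2 : k = i <;> simp [h2] <;> ring

theorem ite_diff (hω : ContDiff ℝ (⊤ : ℕ∞) ω) (hω0 : ∀ x, ω x ≠ 0) (c : Prop) [Decidable c]
    (m : Fin d) (x : Fin d → ℝ) :
    DifferentiableAt ℝ (fun y => if c then uF ω m y else 0) x := by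
  by_cases h : c
  · simp only [h, if_true]
    exact cd_diff (uF_cd hω hω0 m) x
  · simp only [h, if_false]
    exact differentiableAt_const 0

theorem pd_Cf (hg : ContDiff ℝ (⊤ : ℕ∞) g) (hdet : ∀ x, IsUnit (Matrix.of (g x)).det)
    (hω : ContDiff ℝ (⊤ : ℕ∞) ω) (hω0 : ∀ x, ω x ≠ 0) (m k i j : Fin d) (x : Fin d → ℝ) :
    pd m (Cf g ω k i j) x
      = (if k = j then pd m (uF ω i) x else 0) + (if k = i then pd m (uF ω j) x else 0)
        - (pd m (fun y => g y i j) x * uUp g ω k x + g x i j * pd m (uUp g ω k) x) := by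
  unfold Cf
  rw [pd_sub m (DifferentiableAt.fun_add (ite_diff hω hω0 (k = j) i x) (ite_diff hω hω0 (k = i) j x))
    ((cd_diff (entry_cd hg i j) x).fun_mul (cd_diff (uUp_cd hg hdet hω hω0 k) x)),
    pd_add m (ite_diff hω hω0 (k = j) i x) (ite_diff hω hω0 (k = i) j x),
    pd_mul m (cd_diff (entry_cd hg i j) x) (cd_diff (uUp_cd hg hdet hω hω0 k) x),
    pd_ite m x (k = j), pd_ite m x (k = i)]

theorem sum_pd_Cf_first (hg : ContDiff ℝ (⊤ : ℕ∞) g) (hdet : ∀ x, IsUnit (Matrix.of (g x)).det)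
    (hω : ContDiff ℝ (⊤ : ℕ∞) ω) (hω0 : ∀ x, ω x ≠ 0) (i j : Fin d) (x : Fin d → ℝ) :
    ∑ k, pd k (Cf g ω k i j) x
      = pd j (uF ω i) x + pd i (uF ω j) x
        - ∑ k, pd k (fun y => g y i j) x * uUp g ω k x
        - g x i j * ∑ k, pd k (uUp g ω k) x := by
  rw [Finset.sum_congr rfl fun k _ => pd_Cf hg hdet hω hω0 k k i j x,
    Finset.sum_sub_distrib, Finset.sum_add_distrib, Finset.sum_add_distrib,
    Finset.sum_ite_eq' Finset.univ j (fun k => pd k (uF ω i) x),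
    Finset.sum_ite_eq' Finset.univ i (fun k => pd k (uF ω j) x), ← Finset.mul_sum]
  simp
  ring

theorem sum_pd_Cf_trace (hg : ContDiff ℝ (⊤ : ℕ∞) g) (hdet : ∀ x, IsUnit (Matrix.of (g x)).det)
    (hsymm : ∀ x i j, g x i j = g x j i)
    (hω : ContDiff ℝ (⊤ : ℕ∞) ω) (hω0 : ∀ x, ω x ≠ 0) (i j : Fin d) (x : Fin d → ℝ) :
    ∑ k, pd i (Cf g ω k k j) x = (d : ℝ) * pd i (uF ω j) x := by
  have h1 : ∑ k, pd i (Cf g ω k k j) x = pd i (fun y => ∑ k, Cf g ω k k j y) x :=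
    (pd_sum Finset.univ i (fun k _ => cd_diff (Cf_cd hg hdet hω hω0 k k j) x)).symm
  rw [h1, pd_congr (fun y => sum_Cf_kk hdet hsymm y j),
    pd_cmul i ((d : ℝ)) (cd_diff (uF_cd hω hω0 j) x)]

end Stage4

section Stage5
variable {g : (Fin d → ℝ) → Fin d → Fin d → ℝ} {ω Ω : (Fin d → ℝ) → ℝ}

/-- Conformal transformation of the Ricci tensor, up to a pure-trace term. -/
theorem conf_ricci (hg : ContDiff ℝ (⊤ : ℕ∞) g) (hdet : ∀ x, IsUnit (Matrix.of (g x)).det)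
    (hsymm : ∀ x i j, g x i j = g x j i)
    (hω : ContDiff ℝ (⊤ : ℕ∞) ω) (hω0 : ∀ x, ω x ≠ 0) (x : Fin d → ℝ) :
    ∃ c : ℝ, ∀ i j, ricciT (fun y a b => ω y ^ 2 * g y a b) x i j
      = ricciT g x i j
        - ((d : ℝ) - 2) * (hessT g ω x i j / ω x - 2 * (uF ω i x * uF ω j x))
        + c * g x i j := by
  refine ⟨-(∑ k, pd k (uUp g ω k) x) - ∑ l, (∑ k, christoffel g x k k l) * uUp g ω l x
    - ((d : ℝ) - 2) * ∑ l, uF ω l x * uUp g ω l x, fun i j => ?_⟩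
  have hA : ∀ k : Fin d, pd k (fun y => christoffel (fun y a b => ω y ^ 2 * g y a b) y k i j) x
      = pd k (fun y => christoffel g y k i j) x + pd k (Cf g ω k i j) x := by
    intro k
    rw [pd_congr (fun y => conf_christoffel' hg hdet hω hω0 y k i j) k x]
    exact pd_add k (cd_diff (christoffel_cd hg hdet k i j) x)
      (cd_diff (Cf_cd hg hdet hω hω0 k i j) x)
  have hB : ∀ k : Fin d, pd i (fun y => christoffel (fun y a b => ω y ^ 2 * g y a b) y k k j) x
      = pd i (fun y => christoffel g y k k j) x + pd i (Cf g ω k k j) x := by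
    intro k
    rw [pd_congr (fun y => conf_christoffel' hg hdet hω hω0 y k k j) i x]
    exact pd_add i (cd_diff (christoffel_cd hg hdet k k j) x)
      (cd_diff (Cf_cd hg hdet hω hω0 k k j) x)
  have hsum1 : (∑ k, (pd k (fun y => christoffel (fun y a b => ω y ^ 2 * g y a b) y k i j) x
        - pd i (fun y => christoffel (fun y a b => ω y ^ 2 * g y a b) y k k j) x))
      = (∑ k, (pd k (fun y => christoffel g y k i j) x
          - pd i (fun y => christoffel g y k k j) x))
        + (∑ k, pd k (Cf g ω k i j) x - ∑ k, pd i (Cf g ω k k j) x) := by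
    calc (∑ k, (pd k (fun y => christoffel (fun y a b => ω y ^ 2 * g y a b) y k i j) x
        - pd i (fun y => christoffel (fun y a b => ω y ^ 2 * g y a b) y k k j) x))
        = ∑ k, ((pd k (fun y => christoffel g y k i j) x
            - pd i (fun y => christoffel g y k k j) x)
          + (pd k (Cf g ω k i j) x - pd i (Cf g ω k k j) x)) := by
          refine Finset.sum_congr rfl fun k _ => ?_
          rw [hA k, hB k]; ring
      _ = _ := by simp only [Finset.sum_add_distrib, Finset.sum_sub_distrib]
  have hQ : ∀ k l : Fin d,
      christoffel (fun y a b => ω y ^ 2 * g y a b) x k k l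
          * christoffel (fun y a b => ω y ^ 2 * g y a b) x l i j
        - christoffel (fun y a b => ω y ^ 2 * g y a b) x k i l
          * christoffel (fun y a b => ω y ^ 2 * g y a b) x l k j
      = (christoffel g x k k l * christoffel g x l i j
          - christoffel g x k i l * christoffel g x l k j)
        + (christoffel g x k k l * Cf g ω l i j x + Cf g ω k k l x * christoffel g x l i j
          + Cf g ω k k l x * Cf g ω l i j x
          - christoffel g x k i l * Cf g ω l k j x - Cf g ω k i l x * christoffel g x l k j
          - Cf g ω k i l x * Cf g ω l k j x) := by
    intro k l
    rw [conf_christoffel' hg hdet hω hω0 x k k l, conf_christoffel' hg hdet hω hω0 x l i j,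
      conf_christoffel' hg hdet hω hω0 x k i l, conf_christoffel' hg hdet hω hω0 x l k j]
    ring
  have hsum2 : ∑ k, ∑ l, (christoffel (fun y a b => ω y ^ 2 * g y a b) x k k l
        * christoffel (fun y a b => ω y ^ 2 * g y a b) x l i j
      - christoffel (fun y a b => ω y ^ 2 * g y a b) x k i l
        * christoffel (fun y a b => ω y ^ 2 * g y a b) x l k j)
      = ∑ k, ∑ l, (christoffel g x k k l * christoffel g x l i j
          - christoffel g x k i l * christoffel g x l k j)
        + (∑ k, ∑ l, christoffel g x k k l * Cf g ω l i j x
          + ∑ k, ∑ l, Cf g ω k k l x * christoffel g x l i j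
          + ∑ k, ∑ l, Cf g ω k k l x * Cf g ω l i j x
          - ∑ k, ∑ l, christoffel g x k i l * Cf g ω l k j x
          - ∑ k, ∑ l, Cf g ω k i l x * christoffel g x l k j
          - ∑ k, ∑ l, Cf g ω k i l x * Cf g ω l k j x) := by
    rw [Finset.sum_congr rfl fun k _ => Finset.sum_congr rfl fun l _ => hQ k l]
    simp only [Finset.sum_add_distrib, Finset.sum_sub_distrib]
    try ring
  have sA : ∑ k, ∑ l, christoffel g x k k l * Cf g ω l i j x
      = (∑ k, christoffel g x k k j) * uF ω i x + (∑ k, christoffel g x k k i) * uF ω j x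
        - g x i j * ∑ l, (∑ k, christoffel g x k k l) * uUp g ω l x := by
    rw [Finset.sum_comm]
    have h : ∀ l : Fin d, ∑ k, christoffel g x k k l * Cf g ω l i j x
        = (∑ k, christoffel g x k k l) * Cf g ω l i j x := fun l => (Finset.sum_mul _ _ _).symm
    rw [Finset.sum_congr rfl fun l _ => h l]
    exact sum_mul_Cf x (fun l => ∑ k, christoffel g x k k l) i j
  have sB : ∑ k, ∑ l, Cf g ω k k l x * christoffel g x l i j
      = (d : ℝ) * ∑ k, christoffel g x k i j * uF ω k x := by
    rw [Finset.sum_comm]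
    have h : ∀ l : Fin d, ∑ k, Cf g ω k k l x * christoffel g x l i j
        = (d : ℝ) * (christoffel g x l i j * uF ω l x) := by
      intro l
      rw [← Finset.sum_mul, sum_Cf_kk hdet hsymm x l]
      ring
    rw [Finset.sum_congr rfl fun l _ => h l, ← Finset.mul_sum]
  have sC : ∑ k, ∑ l, Cf g ω k k l x * Cf g ω l i j x
      = ((d : ℝ) * uF ω j x) * uF ω i x + ((d : ℝ) * uF ω i x) * uF ω j x
        - g x i j * ((d : ℝ) * ∑ l, uF ω l x * uUp g ω l x) := by
    rw [Finset.sum_comm]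
    have h : ∀ l : Fin d, ∑ k, Cf g ω k k l x * Cf g ω l i j x
        = ((d : ℝ) * uF ω l x) * Cf g ω l i j x := by
      intro l
      rw [← Finset.sum_mul, sum_Cf_kk hdet hsymm x l]
    rw [Finset.sum_congr rfl fun l _ => h l, sum_mul_Cf x (fun l => (d : ℝ) * uF ω l x) i j]
    have h2 : ∑ l, ((d : ℝ) * uF ω l x) * uUp g ω l x
        = (d : ℝ) * ∑ l, uF ω l x * uUp g ω l x := by
      rw [Finset.mul_sum]
      exact Finset.sum_congr rfl fun l _ => by ring
    rw [h2]
  have sD : ∑ k, ∑ l, christoffel g x k i l * Cf g ω l k j x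
      = ∑ k, christoffel g x k i j * uF ω k x + (∑ k, christoffel g x k k i) * uF ω j x
        - ∑ k, g x k j * ∑ l, christoffel g x k i l * uUp g ω l x := by
    have h : ∀ k : Fin d, ∑ l, christoffel g x k i l * Cf g ω l k j x
        = christoffel g x k i j * uF ω k x + christoffel g x k i k * uF ω j x
          - g x k j * ∑ l, christoffel g x k i l * uUp g ω l x :=
      fun k => sum_mul_Cf x (fun l => christoffel g x k i l) k j
    rw [Finset.sum_congr rfl fun k _ => h k, Finset.sum_sub_distrib, Finset.sum_add_distrib,
      ← Finset.sum_mul]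
    have htr : ∑ k, christoffel g x k i k = ∑ k, christoffel g x k k i :=
      Finset.sum_congr rfl fun k _ => christoffel_symm hsymm x k i k
    rw [htr]
  have sE : ∑ k, ∑ l, Cf g ω k i l x * christoffel g x l k j
      = (∑ k, christoffel g x k k j) * uF ω i x + ∑ k, christoffel g x k i j * uF ω k x
        - ∑ l, g x i l * ∑ k, christoffel g x l k j * uUp g ω k x := by
    rw [Finset.sum_comm]
    have h : ∀ l : Fin d, ∑ k, Cf g ω k i l x * christoffel g x l k j
        = christoffel g x l l j * uF ω i x + christoffel g x l i j * uF ω l x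
          - g x i l * ∑ k, christoffel g x l k j * uUp g ω k x := by
      intro l
      rw [Finset.sum_congr rfl fun k _ => mul_comm (Cf g ω k i l x) (christoffel g x l k j)]
      exact sum_mul_Cf x (fun k => christoffel g x l k j) i l
    rw [Finset.sum_congr rfl fun l _ => h l, Finset.sum_sub_distrib, Finset.sum_add_distrib,
      ← Finset.sum_mul]
  have sF : ∑ k, ∑ l, Cf g ω k i l x * Cf g ω l k j x
      = ((d : ℝ) + 2) * (uF ω i x * uF ω j x)
        - 2 * (g x i j * ∑ l, uF ω l x * uUp g ω l x) := by
    have h : ∀ k : Fin d, ∑ l, Cf g ω k i l x * Cf g ω l k j x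
        = Cf g ω k i j x * uF ω k x + Cf g ω k i k x * uF ω j x
          - g x k j * (if k = i then ∑ l, uF ω l x * uUp g ω l x else 0) := by
      intro k
      rw [sum_mul_Cf x (fun l => Cf g ω k i l x) k j, sum_Cf_last hdet hsymm x k i]
    rw [Finset.sum_congr rfl fun k _ => h k, Finset.sum_sub_distrib, Finset.sum_add_distrib]
    have t1 : ∑ k, Cf g ω k i j x * uF ω k x
        = uF ω j x * uF ω i x + uF ω i x * uF ω j x
          - g x i j * ∑ l, uF ω l x * uUp g ω l x := by
      rw [Finset.sum_congr rfl fun k _ => mul_comm (Cf g ω k i j x) (uF ω k x)]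
      exact sum_mul_Cf x (fun k => uF ω k x) i j
    have t2 : ∑ k, Cf g ω k i k x * uF ω j x = ((d : ℝ) * uF ω i x) * uF ω j x := by
      rw [← Finset.sum_mul, sum_Cf_k_k hdet hsymm x i]
    have t3 : ∑ k, g x k j * (if k = i then ∑ l, uF ω l x * uUp g ω l x else 0)
        = g x i j * ∑ l, uF ω l x * uUp g ω l x := by
      have hh : ∀ k : Fin d, g x k j * (if k = i then ∑ l, uF ω l x * uUp g ω l x else 0)
          = if k = i then g x k j * ∑ l, uF ω l x * uUp g ω l x else 0 := by
        intro k; rw [mul_ite, mul_zero]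
      rw [Finset.sum_congr rfl fun k _ => hh k,
        Finset.sum_ite_eq' Finset.univ i (fun k => g x k j * ∑ l, uF ω l x * uUp g ω l x)]
      simp
    rw [t1, t2, t3]
    ring
  have hMC : ∑ k, pd k (fun y => g y i j) x * uUp g ω k x
      = ∑ k, g x k j * ∑ l, christoffel g x k i l * uUp g ω l x
        + ∑ l, g x i l * ∑ k, christoffel g x l k j * uUp g ω k x := by
    have h1 : ∀ k : Fin d, pd k (fun y => g y i j) x * uUp g ω k x
        = ∑ l, (christoffel g x l k i * g x l j * uUp g ω k x
            + christoffel g x l k j * g x i l * uUp g ω k x) := by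
      intro k
      rw [metric_compat hg hdet hsymm x k i j, Finset.sum_mul]
      exact Finset.sum_congr rfl fun l _ => by ring
    rw [Finset.sum_congr rfl fun k _ => h1 k]
    simp only [Finset.sum_add_distrib]
    congr 1
    · rw [Finset.sum_comm]
      refine Finset.sum_congr rfl fun k _ => ?_
      rw [Finset.mul_sum]
      refine Finset.sum_congr rfl fun b _ => ?_
      rw [christoffel_symm hsymm x k b i]
      ring
    · rw [Finset.sum_comm]
      refine Finset.sum_congr rfl fun l _ => ?_
      rw [Finset.mul_sum]
      exact Finset.sum_congr rfl fun k _ => by ring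
  have hui : pd j (uF ω i) x = pd i (pd j ω) x / ω x - uF ω j x * uF ω i x := by
    rw [pd_uF hω hω0 j i x, pd_comm hω j i x]
  have huj : pd i (uF ω j) x = pd i (pd j ω) x / ω x - uF ω i x * uF ω j x :=
    pd_uF hω hω0 i j x
  have hGu : ∑ k, christoffel g x k i j * uF ω k x
      = (∑ k, christoffel g x k i j * pd k ω x) / ω x := by
    rw [Finset.sum_div]
    refine Finset.sum_congr rfl fun k _ => ?_
    unfold uF
    ring
  have hHess : hessT g ω x i j = pd i (pd j ω) x - ∑ k, christoffel g x k i j * pd k ω x := rfl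
  unfold ricciT
  rw [hsum1, hsum2, sum_pd_Cf_first hg hdet hω hω0 i j x,
    sum_pd_Cf_trace hg hdet hsymm hω hω0 i j x, sA, sB, sC, sD, sE, sF, hMC, hui, huj, hGu,
    hHess]
  have hωx := hω0 x
  field_simp
  ring
end Stage5

section Stage6
variable {g : (Fin d → ℝ) → Fin d → Fin d → ℝ} {ω Ω : (Fin d → ℝ) → ℝ}

theorem dcast (hd : 3 ≤ d) : (3:ℝ) ≤ (d:ℝ) := by exact_mod_cast hd

/-- Conformal transformation of the Schouten tensor, up to a pure-trace term. -/
theorem conf_schouten (hd : 3 ≤ d) (hg : ContDiff ℝ (⊤ : ℕ∞) g)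
    (hdet : ∀ x, IsUnit (Matrix.of (g x)).det) (hsymm : ∀ x i j, g x i j = g x j i)
    (hω : ContDiff ℝ (⊤ : ℕ∞) ω) (hω0 : ∀ x, ω x ≠ 0) (x : Fin d → ℝ) :
    ∃ c : ℝ, ∀ i j, schoutenT (fun y a b => ω y ^ 2 * g y a b) x i j
      = schoutenT g x i j
        - (hessT g ω x i j / ω x - 2 * (uF ω i x * uF ω j x))
        + c * g x i j := by
  obtain ⟨cr, hcr⟩ := conf_ricci hg hdet hsymm hω hω0 x
  have hd2 : ((d:ℝ) - 2) ≠ 0 := by have := dcast hd; intro h; rw [sub_eq_zero] at h; linarith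
  have hd1 : ((d:ℝ) - 1) ≠ 0 := by have := dcast hd; intro h; rw [sub_eq_zero] at h; linarith
  refine ⟨(cr - scalT (fun y a b => ω y ^ 2 * g y a b) x * ω x ^ 2 / (2 * ((d:ℝ) - 1))
    + scalT g x / (2 * ((d:ℝ) - 1))) / ((d:ℝ) - 2), fun i j => ?_⟩
  simp only [schoutenT]
  rw [hcr i j]
  field_simp
  ring

theorem sum_minv_g (hdet : ∀ x, IsUnit (Matrix.of (g x)).det)
    (hsymm : ∀ x i j, g x i j = g x j i) (x : Fin d → ℝ) :
    ∑ a, ∑ b, minv g x a b * g x a b = (d : ℝ) := by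
  have h : ∀ a : Fin d, ∑ b, minv g x a b * g x a b = 1 := by
    intro a
    have hh : ∀ b, minv g x a b * g x a b = minv g x a b * g x b a := fun b => by
      rw [hsymm x a b]
    rw [Finset.sum_congr rfl fun b _ => hh b, minv_mul hdet x a a]
    simp
  rw [Finset.sum_congr rfl fun a _ => h a]
  simp [Finset.card_univ]

/-- The conformal quasi-Einstein combination, up to a pure-trace term. -/
theorem conf_combination (hd : 3 ≤ d) (hg : ContDiff ℝ (⊤ : ℕ∞) g)
    (hdet : ∀ x, IsUnit (Matrix.of (g x)).det) (hsymm : ∀ x i j, g x i j = g x j i)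
    (hω : ContDiff ℝ (⊤ : ℕ∞) ω) (hω0 : ∀ x, ω x ≠ 0) (hΩ : ContDiff ℝ (⊤ : ℕ∞) Ω) (x : Fin d → ℝ) :
    ∃ C : ℝ, ∀ i j, hessT (fun y a b => ω y ^ 2 * g y a b) (fun y => ω y * Ω y) x i j
        + (ω x * Ω x) * schoutenT (fun y a b => ω y ^ 2 * g y a b) x i j
      = ω x * (hessT g Ω x i j + Ω x * schoutenT g x i j) + C * g x i j := by
  obtain ⟨cs, hcs⟩ := conf_schouten hd hg hdet hsymm hω hω0 x
  refine ⟨∑ l, uUp g ω l x * pd l (fun y => ω y * Ω y) x + ω x * Ω x * cs, fun i j => ?_⟩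
  rw [conf_hess hg hdet hω hω0 (fun y => ω y * Ω y) x i j, hess_prod hg hω hΩ x i j, hcs i j]
  have hpd : ∀ m, pd m (fun y => ω y * Ω y) x = pd m ω x * Ω x + ω x * pd m Ω x := fun m =>
    pd_mul m (cd_diff hω x) (cd_diff hΩ x)
  rw [hpd i, hpd j]
  have hu : ∀ m, pd m ω x = uF ω m x * ω x := fun m => by
    unfold uF; exact (div_mul_cancel₀ _ (hω0 x)).symm
  rw [hu i, hu j]
  have hωx := hω0 x
  field_simp
  ring

end Stage6

end QEAux

/-- if `(M,g,Ω)` is quasi-Einstein (dimension `d ≥ 3`) and `ω` is a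
nowhere-vanishing smooth function, then `(M, ω²g, ωΩ)` is also quasi-Einstein. -/
theorem quasiEinstein_conformal {d : ℕ} (hd : 3 ≤ d)
    (g : (Fin d → ℝ) → Fin d → Fin d → ℝ) (Ω ω : (Fin d → ℝ) → ℝ)
    (hg : ContDiff ℝ (⊤ : ℕ∞) g) (hsymm : ∀ x i j, g x i j = g x j i)
    (hdet : ∀ x, IsUnit (Matrix.of (g x)).det)
    (hΩ : ContDiff ℝ (⊤ : ℕ∞) Ω) (hω : ContDiff ℝ (⊤ : ℕ∞) ω) (hω0 : ∀ x, ω x ≠ 0)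
    (hQE : QuasiEinstein g Ω) :
    QuasiEinstein (fun y a b => ω y ^ 2 * g y a b) (fun y => ω y * Ω y) := by
  intro x i j
  obtain ⟨C, hC⟩ := QEAux.conf_combination hd hg hdet hsymm hω hω0 hΩ x
  have hT : ∀ a b, hessT g Ω x a b + Ω x * schoutenT g x a b = sQE g Ω x * g x a b := by
    intro a b
    have h := hQE x a b
    linarith
  have hωx := hω0 x
  have hdd : ((d : ℝ)) ≠ 0 := by
    have := QEAux.dcast hd
    intro h; rw [h] at this; linarith
  have step1 : boxT (fun y a b => ω y ^ 2 * g y a b) (fun y => ω y * Ω y) x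
      + (ω x * Ω x) * ltrT (fun y a b => ω y ^ 2 * g y a b) x
      = ∑ a, ((∑ b, minv (fun y a b => ω y ^ 2 * g y a b) x a b
            * hessT (fun y a b => ω y ^ 2 * g y a b) (fun y => ω y * Ω y) x a b)
        + (ω x * Ω x) * ∑ b, minv (fun y a b => ω y ^ 2 * g y a b) x a b
            * schoutenT (fun y a b => ω y ^ 2 * g y a b) x a b) := by
    unfold boxT ltrT
    rw [Finset.mul_sum, Finset.sum_add_distrib]
  have h1 : ∀ a : Fin d, ((∑ b, minv (fun y a b => ω y ^ 2 * g y a b) x a b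
            * hessT (fun y a b => ω y ^ 2 * g y a b) (fun y => ω y * Ω y) x a b)
        + (ω x * Ω x) * ∑ b, minv (fun y a b => ω y ^ 2 * g y a b) x a b
            * schoutenT (fun y a b => ω y ^ 2 * g y a b) x a b)
      = (ω x ^ 2)⁻¹ * ((ω x * sQE g Ω x + C) * ∑ b, minv g x a b * g x a b) := by
    intro a
    rw [Finset.mul_sum, ← Finset.sum_add_distrib, Finset.mul_sum, Finset.mul_sum]
    refine Finset.sum_congr rfl fun b _ => ?_
    rw [QEAux.conf_minv hdet hω0 x a b]
    calc (ω x ^ 2)⁻¹ * minv g x a b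
            * hessT (fun y a b => ω y ^ 2 * g y a b) (fun y => ω y * Ω y) x a b
          + ω x * Ω x * ((ω x ^ 2)⁻¹ * minv g x a b
            * schoutenT (fun y a b => ω y ^ 2 * g y a b) x a b)
        = (ω x ^ 2)⁻¹ * minv g x a b
            * (hessT (fun y a b => ω y ^ 2 * g y a b) (fun y => ω y * Ω y) x a b
              + (ω x * Ω x) * schoutenT (fun y a b => ω y ^ 2 * g y a b) x a b) := by ring
      _ = (ω x ^ 2)⁻¹ * minv g x a b
            * (ω x * (sQE g Ω x * g x a b) + C * g x a b) := by rw [hC a b, hT a b]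
      _ = (ω x ^ 2)⁻¹ * ((ω x * sQE g Ω x + C) * (minv g x a b * g x a b)) := by ring
  have htr : boxT (fun y a b => ω y ^ 2 * g y a b) (fun y => ω y * Ω y) x
      + (ω x * Ω x) * ltrT (fun y a b => ω y ^ 2 * g y a b) x
      = (ω x ^ 2)⁻¹ * ((ω x * sQE g Ω x + C) * (d : ℝ)) := by
    rw [step1, Finset.sum_congr rfl fun a _ => h1 a, ← Finset.mul_sum]
    congr 1
    rw [← Finset.mul_sum, QEAux.sum_minv_g hdet hsymm x]
  show hessT (fun y a b => ω y ^ 2 * g y a b) (fun y => ω y * Ω y) x i j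
      + (fun y => ω y * Ω y) x * schoutenT (fun y a b => ω y ^ 2 * g y a b) x i j
      - sQE (fun y a b => ω y ^ 2 * g y a b) (fun y => ω y * Ω y) x
        * (fun y a b => ω y ^ 2 * g y a b) x i j = 0
  have hbeta1 : (fun y => ω y * Ω y) x = ω x * Ω x := rfl
  have hbeta2 : (fun y a b => ω y ^ 2 * g y a b) x i j = ω x ^ 2 * g x i j := rfl
  rw [hbeta1, hbeta2, hC i j, hT i j]
  unfold sQE
  rw [hbeta1, htr]
  unfold sQE
  field_simp
  ring
end
end

section
/- Consider on ℝ² \ {uv = 0} (times a manifold S) the metric g̃ = 2G du(dv + v β_A dx^A) + μ_{AB} dx^A dx^B where G, β, μ depend only on s := uv and x. If the Killing one-form of η = u∂_u − v∂_v is integrable (η♭ ∧ dη♭ = 0), then the one-form β on S is closed: the exterior derivative of β along the x-directions (at fixed s) vanishes. -/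
noncomputable section
open scoped BigOperators

/-- The total space `ℝ × ℝ × S` with coordinates `(u, v, x)`. -/
abbrev RWSpace (n : ℕ) := ℝ × ℝ × (Fin n → ℝ)

/-- The coordinate directions `∂_u`, `∂_v`, `∂_{x^A}`. -/
def dirRW (n : ℕ) : Fin (n + 2) → RWSpace n :=
  Fin.cases ((1 : ℝ), (0 : ℝ), (0 : Fin n → ℝ))
    (Fin.cases ((0 : ℝ), (1 : ℝ), (0 : Fin n → ℝ)) (fun j => (0, 0, Pi.single j 1)))

/-- Directional derivative along the `i`-th coordinate direction. -/
def DD {n : ℕ} (i : Fin (n + 2)) (f : RWSpace n → ℝ) (p : RWSpace n) : ℝ :=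
  fderiv ℝ f p (dirRW n i)

/-- The Rácz–Wald metric `g̃ = 2G du(dv + v β_A dx^A) + μ_{AB} dx^A dx^B`, where `G`, `β`, `μ`
depend only on `s = uv` and `x`, evaluated at `p` on the tangent vectors `X`, `Y`. -/
def gRW {n : ℕ} (G : ℝ × (Fin n → ℝ) → ℝ) (β : ℝ × (Fin n → ℝ) → Fin n → ℝ)
    (μ : ℝ × (Fin n → ℝ) → Fin n → Fin n → ℝ) (p X Y : RWSpace n) : ℝ :=
  G (p.1 * p.2.1, p.2.2) * (X.1 * Y.2.1 + Y.1 * X.2.1)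
    + G (p.1 * p.2.1, p.2.2) * p.2.1 *
      (X.1 * (∑ A, β (p.1 * p.2.1, p.2.2) A * Y.2.2 A)
        + Y.1 * (∑ A, β (p.1 * p.2.1, p.2.2) A * X.2.2 A))
    + ∑ A, ∑ B, μ (p.1 * p.2.1, p.2.2) A B * X.2.2 A * Y.2.2 B

/-- The Killing field `η = u ∂_u - v ∂_v`. -/
def etaRW {n : ℕ} (p : RWSpace n) : RWSpace n := (p.1, -p.2.1, 0)

/-- Components of the Killing one-form `η♭ = g̃(η, ·)`. -/
def etaFlatRW {n : ℕ} (G : ℝ × (Fin n → ℝ) → ℝ) (β : ℝ × (Fin n → ℝ) → Fin n → ℝ)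
    (μ : ℝ × (Fin n → ℝ) → Fin n → Fin n → ℝ) (i : Fin (n + 2)) (p : RWSpace n) : ℝ :=
  gRW G β μ p (etaRW p) (dirRW n i)


section Aux

variable {n : ℕ}

def Phi (p : RWSpace n) : ℝ × (Fin n → ℝ) := (p.1 * p.2.1, p.2.2)

def PhiD (p : RWSpace n) : RWSpace n →L[ℝ] ℝ × (Fin n → ℝ) :=
  (p.1 • ((ContinuousLinearMap.fst ℝ ℝ (Fin n → ℝ)).comp
      (ContinuousLinearMap.snd ℝ ℝ (ℝ × (Fin n → ℝ))))
    + p.2.1 • ContinuousLinearMap.fst ℝ (ℝ) (ℝ × (Fin n → ℝ))).prod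
    ((ContinuousLinearMap.snd ℝ ℝ (Fin n → ℝ)).comp
      (ContinuousLinearMap.snd ℝ ℝ (ℝ × (Fin n → ℝ))))

lemma hasFDerivAt_Phi (p : RWSpace n) : HasFDerivAt (Phi (n := n)) (PhiD p) p := by
  have h1 : HasFDerivAt (fun p : RWSpace n => p.1 * p.2.1)
      (p.1 • ((ContinuousLinearMap.fst ℝ ℝ (Fin n → ℝ)).comp
        (ContinuousLinearMap.snd ℝ ℝ (ℝ × (Fin n → ℝ))))
      + p.2.1 • ContinuousLinearMap.fst ℝ (ℝ) (ℝ × (Fin n → ℝ))) p :=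
    (hasFDerivAt_fst (p := p)).mul ((hasFDerivAt_fst).comp p (hasFDerivAt_snd))
  exact HasFDerivAt.prodMk h1 ((hasFDerivAt_snd).comp p (hasFDerivAt_snd))

lemma hasFDerivAt_compPhi (f : ℝ × (Fin n → ℝ) → ℝ) (hf : ContDiff ℝ (⊤ : ℕ∞) f) (p : RWSpace n) :
    HasFDerivAt (fun p : RWSpace n => f (Phi p))
      ((fderiv ℝ f (Phi p)).comp (PhiD p)) p :=
  ((hf.differentiable (by simp) (Phi p)).hasFDerivAt).comp p (hasFDerivAt_Phi p)

lemma DD_compPhi (f : ℝ × (Fin n → ℝ) → ℝ) (hf : ContDiff ℝ (⊤ : ℕ∞) f) (p : RWSpace n)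
    (i : Fin (n+2)) :
    DD i (fun p : RWSpace n => f (Phi p)) p
      = fderiv ℝ f (Phi p)
          (p.1 * (dirRW n i).2.1 + p.2.1 * (dirRW n i).1, (dirRW n i).2.2) := by
  rw [DD, (hasFDerivAt_compPhi f hf p).fderiv]
  simp [PhiD, mul_comm]

lemma DD_v_mul (f : ℝ × (Fin n → ℝ) → ℝ) (hf : ContDiff ℝ (⊤ : ℕ∞) f) (p : RWSpace n)
    (i : Fin (n+2)) :
    DD i (fun p : RWSpace n => p.2.1 * f (Phi p)) p
      = (dirRW n i).2.1 * f (Phi p) + p.2.1 * DD i (fun p : RWSpace n => f (Phi p)) p := by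
  have h1 : HasFDerivAt (fun p : RWSpace n => p.2.1)
      ((ContinuousLinearMap.fst ℝ ℝ (Fin n → ℝ)).comp
        (ContinuousLinearMap.snd ℝ ℝ (ℝ × (Fin n → ℝ)))) p :=
    (hasFDerivAt_fst).comp p (hasFDerivAt_snd)
  have h := h1.mul (hasFDerivAt_compPhi f hf p)
  rw [DD, show (fun p : RWSpace n => p.2.1 * f (Phi p)) = ((fun p : RWSpace n => p.2.1) * fun p => f (Phi p)) from rfl, h.fderiv, DD, (hasFDerivAt_compPhi f hf p).fderiv]
  simp [mul_comm]
  ring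

lemma DD_u_mul (f : ℝ × (Fin n → ℝ) → ℝ) (hf : ContDiff ℝ (⊤ : ℕ∞) f) (p : RWSpace n)
    (i : Fin (n+2)) :
    DD i (fun p : RWSpace n => p.1 * f (Phi p)) p
      = (dirRW n i).1 * f (Phi p) + p.1 * DD i (fun p : RWSpace n => f (Phi p)) p := by
  have h := (hasFDerivAt_fst (p := p)).mul (hasFDerivAt_compPhi f hf p)
  rw [DD, show (fun p : RWSpace n => p.1 * f (Phi p)) = ((Prod.fst : RWSpace n → ℝ) * fun p => f (Phi p)) from rfl, h.fderiv, DD, (hasFDerivAt_compPhi f hf p).fderiv]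
  simp [mul_comm]
  ring

lemma DD_neg (f : RWSpace n → ℝ) (p : RWSpace n) (i : Fin (n+2)) :
    DD i (fun p => -(f p)) p = -(DD i f p) := by
  rw [DD, DD, fderiv_fun_neg]
  simp

variable (G : ℝ × (Fin n → ℝ) → ℝ) (β : ℝ × (Fin n → ℝ) → Fin n → ℝ)
    (μ : ℝ × (Fin n → ℝ) → Fin n → Fin n → ℝ)

lemma etaFlat_zero : etaFlatRW G β μ 0 = fun p : RWSpace n => -(p.2.1 * G (Phi p)) := by
  funext p
  simp [etaFlatRW, gRW, etaRW, dirRW, Phi, mul_comm]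

lemma etaFlat_one :
    etaFlatRW G β μ (Fin.succ 0) = fun p : RWSpace n => p.1 * G (Phi p) := by
  funext p
  simp only [etaFlatRW, gRW, etaRW, dirRW, Fin.cases_succ, Fin.cases_zero]
  simp [Phi, mul_comm]

lemma etaFlat_succ (A : Fin n) :
    etaFlatRW G β μ A.succ.succ
      = fun p : RWSpace n => (fun q => q.1 * G q * β q A) (Phi p) := by
  funext p
  simp only [etaFlatRW, gRW, etaRW, dirRW, Fin.cases_succ]
  simp [Phi, Pi.single_apply, mul_ite, Finset.sum_ite_eq']
  ring

lemma dirRW_zero : dirRW n 0 = ((1 : ℝ), (0 : ℝ), (0 : Fin n → ℝ)) := rfl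

lemma dirRW_one : dirRW n (Fin.succ 0) = ((0 : ℝ), (1 : ℝ), (0 : Fin n → ℝ)) := rfl

lemma dirRW_succ (A : Fin n) : dirRW n A.succ.succ = ((0:ℝ), (0:ℝ), Pi.single A 1) := rfl

lemma fderiv_F_dir (hG : ContDiff ℝ (⊤ : ℕ∞) G) (A : Fin n)
    (hβA : ContDiff ℝ (⊤ : ℕ∞) (fun q : ℝ × (Fin n → ℝ) => β q A))
    (q : ℝ × (Fin n → ℝ)) (w : ℝ × (Fin n → ℝ)) :
    fderiv ℝ (fun q : ℝ × (Fin n → ℝ) => q.1 * G q * β q A) q w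
      = (w.1 * G q + q.1 * fderiv ℝ G q w) * β q A
        + q.1 * G q * fderiv ℝ (fun q => β q A) q w := by
  have h1 : HasFDerivAt (fun q : ℝ × (Fin n → ℝ) => q.1 * G q)
      (q.1 • fderiv ℝ G q + G q • ContinuousLinearMap.fst ℝ ℝ (Fin n → ℝ)) q :=
    (hasFDerivAt_fst).mul (hG.differentiable (by simp) q).hasFDerivAt
  have h2 := h1.mul (hβA.differentiable (by simp) q).hasFDerivAt
  rw [show (fun q : ℝ × (Fin n → ℝ) => q.1 * G q * β q A) = ((fun q : ℝ × (Fin n → ℝ) => q.1 * G q) * fun q => β q A) from rfl, h2.fderiv]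
  simp
  ring

lemma rw_key (hG : ContDiff ℝ (⊤ : ℕ∞) G) (hβ : ContDiff ℝ (⊤ : ℕ∞) β)
    (hG0 : ∀ q, G q ≠ 0)
    (hint : ∀ (p : RWSpace n) (i j k : Fin (n + 2)),
      etaFlatRW G β μ i p * (DD j (etaFlatRW G β μ k) p - DD k (etaFlatRW G β μ j) p)
        + etaFlatRW G β μ j p * (DD k (etaFlatRW G β μ i) p - DD i (etaFlatRW G β μ k) p)
        + etaFlatRW G β μ k p * (DD i (etaFlatRW G β μ j) p - DD j (etaFlatRW G β μ i) p)
        = 0)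
    (s : ℝ) (hs : s ≠ 0) (x : Fin n → ℝ) (A B : Fin n) :
    fderiv ℝ (fun q : ℝ × (Fin n → ℝ) => β q A) (s, x) ((0 : ℝ), Pi.single B 1)
      = fderiv ℝ (fun q : ℝ × (Fin n → ℝ) => β q B) (s, x) ((0 : ℝ), Pi.single A 1) := by
  have hβA : ContDiff ℝ (⊤ : ℕ∞) (fun q : ℝ × (Fin n → ℝ) => β q A) := contDiff_pi.1 hβ A
  have hβB : ContDiff ℝ (⊤ : ℕ∞) (fun q : ℝ × (Fin n → ℝ) => β q B) := contDiff_pi.1 hβ B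
  have hfA : ContDiff ℝ (⊤ : ℕ∞) (fun q : ℝ × (Fin n → ℝ) => q.1 * G q * β q A) :=
    (contDiff_fst.mul hG).mul hβA
  have hfB : ContDiff ℝ (⊤ : ℕ∞) (fun q : ℝ × (Fin n → ℝ) => q.1 * G q * β q B) :=
    (contDiff_fst.mul hG).mul hβB
  have h0 := hint (s, 1, x) 0 A.succ.succ B.succ.succ
  have h1 := hint (s, 1, x) (Fin.succ 0) A.succ.succ B.succ.succ
  simp only [etaFlat_zero G β μ, etaFlat_one G β μ, etaFlat_succ G β μ,
    DD_neg, DD_v_mul G hG, DD_u_mul G hG, DD_compPhi G hG,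
    DD_compPhi _ hfA, DD_compPhi _ hfB,
    dirRW_zero, dirRW_one, dirRW_succ] at h0 h1
  simp only [Phi] at h0 h1
  simp only [mul_zero, mul_one, zero_mul, one_mul, add_zero, zero_add, mul_neg, neg_mul,
    neg_neg] at h0 h1
  have m : ((s, 0) : ℝ × (Fin n → ℝ)) = s • ((1 : ℝ), (0 : Fin n → ℝ)) := by
    simp
  rw [m, map_smul, map_smul, smul_eq_mul, smul_eq_mul] at h1
  rw [fderiv_F_dir G β hG B hβB (s, x) ((0 : ℝ), Pi.single A 1),
    fderiv_F_dir G β hG A hβA (s, x) ((0 : ℝ), Pi.single B 1)] at h0 h1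
  simp only [zero_mul, zero_add] at h0 h1
  have key : s ^ 2 * (G (s, x)) ^ 2 *
      ((fderiv ℝ (fun q => β q B) (s, x)) ((0 : ℝ), Pi.single A 1)
        - (fderiv ℝ (fun q => β q A) (s, x)) ((0 : ℝ), Pi.single B 1)) = 0 := by
    linear_combination (1 / 2) * h1 - (s / 2) * h0
  have hne : s ^ 2 * (G (s, x)) ^ 2 ≠ 0 := by
    exact mul_ne_zero (pow_ne_zero 2 hs) (pow_ne_zero 2 (hG0 _))
  have := (mul_eq_zero.mp key).resolve_left hne
  linarith [this]

lemma fderiv_partial (f : ℝ × (Fin n → ℝ) → ℝ) (hf : ContDiff ℝ (⊤ : ℕ∞) f)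
    (s : ℝ) (x : Fin n → ℝ) (w : Fin n → ℝ) :
    fderiv ℝ (fun y => f (s, y)) x w = fderiv ℝ f (s, x) ((0 : ℝ), w) := by
  have hin : HasFDerivAt (fun y : Fin n → ℝ => ((s, y) : ℝ × (Fin n → ℝ)))
      (ContinuousLinearMap.inr ℝ ℝ (Fin n → ℝ)) x :=
    HasFDerivAt.prodMk (hasFDerivAt_const s x) (hasFDerivAt_id x)
  have h : HasFDerivAt (fun y => f (s, y))
      ((fderiv ℝ f (s, x)).comp (ContinuousLinearMap.inr ℝ ℝ (Fin n → ℝ))) x :=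
    ((hf.differentiable (by simp) (s, x)).hasFDerivAt).comp x hin
  rw [h.fderiv]
  rfl

end Aux

/-- for the Rácz–Wald metric `g̃ = 2G du(dv + v β) + μ` (with `G`, `β`, `μ`
functions of `s = uv` and `x` only), if the Killing one-form of `η = u∂_u - v∂_v` is
integrable, `η♭ ∧ dη♭ = 0`, then the one-form `β` is closed: its exterior derivative along
the `x`-directions (at fixed `s`) vanishes. -/
theorem integrable_killing_one_form_implies_beta_closed {n : ℕ}
    (G : ℝ × (Fin n → ℝ) → ℝ) (β : ℝ × (Fin n → ℝ) → Fin n → ℝ)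
    (μ : ℝ × (Fin n → ℝ) → Fin n → Fin n → ℝ)
    (hG : ContDiff ℝ (⊤ : ℕ∞) G) (hβ : ContDiff ℝ (⊤ : ℕ∞) β) (hμ : ContDiff ℝ (⊤ : ℕ∞) μ)
    (hG0 : ∀ q, G q ≠ 0) (hμsymm : ∀ q A B, μ q A B = μ q B A)
    (hint : ∀ (p : RWSpace n) (i j k : Fin (n + 2)),
      etaFlatRW G β μ i p * (DD j (etaFlatRW G β μ k) p - DD k (etaFlatRW G β μ j) p)
        + etaFlatRW G β μ j p * (DD k (etaFlatRW G β μ i) p - DD i (etaFlatRW G β μ k) p)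
        + etaFlatRW G β μ k p * (DD i (etaFlatRW G β μ j) p - DD j (etaFlatRW G β μ i) p)
        = 0) :
    ∀ (s : ℝ) (x : Fin n → ℝ) (A B : Fin n),
      fderiv ℝ (fun y => β (s, y) A) x (Pi.single B 1)
        = fderiv ℝ (fun y => β (s, y) B) x (Pi.single A 1) := by
  intro s x A B
  have hβA : ContDiff ℝ (⊤ : ℕ∞) (fun q : ℝ × (Fin n → ℝ) => β q A) := contDiff_pi.1 hβ A
  have hβB : ContDiff ℝ (⊤ : ℕ∞) (fun q : ℝ × (Fin n → ℝ) => β q B) := contDiff_pi.1 hβ B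
  rw [fderiv_partial (fun q => β q A) hβA s x (Pi.single B 1),
    fderiv_partial (fun q => β q B) hβB s x (Pi.single A 1)]
  -- the difference of the two sides, as a function of `s`
  set h : ℝ → ℝ := fun t =>
    fderiv ℝ (fun q : ℝ × (Fin n → ℝ) => β q A) (t, x) ((0 : ℝ), Pi.single B 1)
      - fderiv ℝ (fun q : ℝ × (Fin n → ℝ) => β q B) (t, x) ((0 : ℝ), Pi.single A 1)
    with hh
  have hcont : Continuous h := by
    have c0 : Continuous fun t : ℝ => ((t, x) : ℝ × (Fin n → ℝ)) :=
      continuous_id.prodMk continuous_const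
    have c1 : Continuous fun t : ℝ =>
        fderiv ℝ (fun q : ℝ × (Fin n → ℝ) => β q A) (t, x) ((0 : ℝ), Pi.single B 1) :=
      (((hβA.continuous_fderiv (by simp)).comp c0).clm_apply continuous_const)
    have c2 : Continuous fun t : ℝ =>
        fderiv ℝ (fun q : ℝ × (Fin n → ℝ) => β q B) (t, x) ((0 : ℝ), Pi.single A 1) :=
      (((hβB.continuous_fderiv (by simp)).comp c0).clm_apply continuous_const)
    exact c1.sub c2
  have hzero : Set.EqOn h (fun _ => (0 : ℝ)) ({0}ᶜ : Set ℝ) := by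
    intro t ht
    have := rw_key G β μ hG hβ hG0 hint t ht x A B
    simp only [hh]
    rw [this]
    simp
  have hall : h = fun _ => (0 : ℝ) :=
    Continuous.ext_on (dense_compl_singleton (0 : ℝ)) hcont continuous_const hzero
  have hs0 : h s = 0 := by rw [hall]
  simp only [hh] at hs0
  linarith [hs0]
end
end
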